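/- arXiv:1304.6538 — 7 statements merged into one kernel-verified Lean document; each statement's English description precedes it below -/
import Mathlib

section
/- For the sequence of square matrices A_n of size 2^(n-1), indexed by compositions of n in reverse lexicographic order, defined by A_n(I,J) = (∏_{k ∈ 𝒜(Ī,J̄)} t_k)·(∏_{l ∈ 𝒜(Ī~,J̄~)} q_l), one has the block recursion A_n = [[B_{n-1}, A_{n-1}T_{n-1}],[q_1 B_{n-1}, A_{n-1}]], where B_{n-1} is obtained from A_{n-1} by substituting q_{i+1} for each q_i, and T_{n-1} = diag(t_{ℓ(I)}). -/
/-! Compositions of `n` are encoded by their descent sets, i.e. by boolean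
words `u : Fin (n-1) → Bool`, where `u j = true` iff `j+1` is a descent of the
composition.  In the reverse lexicographic order used in the paper, the block
split of the matrix `A_n` corresponds to splitting on the first letter of the
word (whether `1` is a descent or not), i.e. on `Fin.cons b u`. -/

/-- The (increasingly sorted) list of descents of the composition of `n = m+1`
encoded by the boolean word `v : Fin m → Bool`. -/
def desList {m : ℕ} (v : Fin m → Bool) : List ℕ :=
  ((List.finRange m).filter (fun j => v j)).map (fun j => (j : ℕ) + 1)

/-- `𝒜(I,J) = {k < ℓ(J) : j_1 + ⋯ + j_k ∉ Des(I)}` for the compositions `I, J`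
encoded by the words `u, v`: the `k`-th partial sum of `J` is the `k`-th
smallest descent of `J`. -/
def AAset {m : ℕ} (u v : Fin m → Bool) : Finset ℕ :=
  (Finset.Icc 1 (desList v).length).filter
    (fun k => (desList v).getD (k-1) 0 ∉ desList u)

/-- The mirror image `Ī`: `Des(Ī) = {n - d : d ∈ Des(I)}`, i.e. the reversed
boolean word. -/
def mirW {m : ℕ} (u : Fin m → Bool) : Fin m → Bool := fun j => u j.rev

/-- The conjugate of the mirror image, `Ī∼`, whose descent set is the
complement of `Des(I)` in `[n-1]`: the complemented boolean word. -/
def cmplW {m : ℕ} (u : Fin m → Bool) : Fin m → Bool := fun j => ! u j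

/-- The entry `A_n(I,J) = (∏_{k ∈ 𝒜(Ī,J̄)} t_k) · (∏_{l ∈ 𝒜(Ī∼,J̄∼)} q_l)` of
the matrix `A_n` (here `n = m+1`, rows and columns indexed by boolean words). -/
def matA {R : Type*} [CommRing R] (q t : ℕ → R) {m : ℕ} (u v : Fin m → Bool) : R :=
  (∏ k ∈ AAset (mirW u) (mirW v), t k) * (∏ l ∈ AAset (cmplW u) (cmplW v), q l)

/-! Prepending letters `b, c` to the words `u, v` appends them to the mirror images, which can
only create one new index of `𝒜`, namely the index `ℓ(J̄)` of the new last descent (when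
`c = true` and `b = false`); this gives the factor `t_{ℓ(J)}`. On the complemented words the letters are
prepended instead: if `J̄∼` gains the descent `1`, all its descents are renumbered by one, so
`q_i` becomes `q_{i+1}` and the new index `1` contributes `q_1` exactly when `Ī∼` lacks the
descent `1`; otherwise nothing changes. -/

def filterPos (p : ℕ → Prop) [DecidablePred p] (L : List ℕ) : Finset ℕ :=
  (Finset.Icc 1 L.length).filter fun k => p (L.getD (k - 1) 0)

section filterPos

variable (p : ℕ → Prop) [DecidablePred p]

theorem mem_filterPos {L : List ℕ} {k : ℕ} :
    k ∈ filterPos p L ↔ (1 ≤ k ∧ k ≤ L.length) ∧ p (L.getD (k - 1) 0) := by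
  simp [filterPos]

theorem filterPos_congr {p' : ℕ → Prop} [DecidablePred p'] {L : List ℕ}
    (h : ∀ x ∈ L, p x ↔ p' x) : filterPos p L = filterPos p' L := by
  refine Finset.filter_congr fun k hk => ?_
  rw [Finset.mem_Icc] at hk
  rw [List.getD_eq_getElem _ _ (by omega)]
  exact h _ (List.getElem_mem _)

theorem filterPos_map (f : ℕ → ℕ) (L : List ℕ) :
    filterPos p (L.map f) = filterPos (fun x => p (f x)) L := by
  unfold filterPos
  rw [List.length_map]
  refine Finset.filter_congr fun k hk => ?_
  rw [Finset.mem_Icc] at hk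
  rw [List.getD_eq_getElem _ _ (by simp; omega), List.getD_eq_getElem _ _ (by omega),
    List.getElem_map]

theorem filterPos_append_singleton (L : List ℕ) (x : ℕ) :
    filterPos p (L ++ [x]) =
      if p x then insert (L.length + 1) (filterPos p L) else filterPos p L := by
  have herase : (filterPos p (L ++ [x])).erase (L.length + 1) = filterPos p L := by
    ext k
    simp only [Finset.mem_erase, mem_filterPos, List.length_append, List.length_singleton]
    constructor
    · rintro ⟨hne, hk, hp⟩
      rw [List.getD_append _ _ _ _ (by omega)] at hp
      exact ⟨by omega, hp⟩
    · rintro ⟨hk, hp⟩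
      rw [← List.getD_append _ [x] _ _ (by omega)] at hp
      exact ⟨by omega, by omega, hp⟩
  have hlast : L.length + 1 ∈ filterPos p (L ++ [x]) ↔ p x := by
    simp [mem_filterPos]
  rw [← herase]
  split_ifs with h
  · rw [Finset.insert_erase (hlast.2 h)]
  · rw [Finset.erase_eq_of_notMem (mt hlast.1 h)]

theorem filterPos_cons (a : ℕ) (L : List ℕ) :
    filterPos p (a :: L) =
      (if p a then {1} else ∅) ∪ (filterPos p L).image (· + 1) := by
  ext k
  rcases k with _ | _ | k
  · split_ifs <;> simp [mem_filterPos]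
  · split_ifs <;> simp [mem_filterPos, *]
  · split_ifs <;> simp [mem_filterPos]

end filterPos

section desList

variable {m : ℕ}

theorem desList_eq_map_filter (v : Fin m → Bool) :
    desList v = ((List.finRange m).filter fun j => v j).map fun j => j.val + 1 := by
  simp only [desList, List.pure_def, List.bind_eq_flatMap, ← List.map_eq_flatMap, List.map_map]
  rfl

theorem one_le_of_mem_desList {v : Fin m → Bool} {x : ℕ} (hx : x ∈ desList v) : 1 ≤ x := by
  rw [desList_eq_map_filter, List.mem_map] at hx
  obtain ⟨j, -, rfl⟩ := hx
  omega

theorem le_of_mem_desList {v : Fin m → Bool} {x : ℕ} (hx : x ∈ desList v) : x ≤ m := by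
  rw [desList_eq_map_filter, List.mem_map] at hx
  obtain ⟨j, -, rfl⟩ := hx
  exact j.isLt

theorem desList_cons (c : Bool) (v : Fin m → Bool) :
    desList (Fin.cons c v : Fin (m + 1) → Bool) =
      (if c then [1] else []) ++ (desList v).map (· + 1) := by
  rw [desList_eq_map_filter, desList_eq_map_filter, List.finRange_succ, List.filter_cons,
    List.filter_map]
  cases c <;> simp [Function.comp_def, List.map_map]

theorem desList_snoc (c : Bool) (v : Fin m → Bool) :
    desList (Fin.snoc v c : Fin (m + 1) → Bool) =
      desList v ++ (if c then [m + 1] else []) := by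
  rw [desList_eq_map_filter, desList_eq_map_filter, List.finRange_succ_last, List.filter_append,
    List.filter_map]
  cases c <;> simp [Function.comp_def, List.map_map]

theorem succ_mem_desList_cons (b : Bool) (u : Fin m → Bool) {x : ℕ} (hx : 1 ≤ x) :
    x + 1 ∈ desList (Fin.cons b u : Fin (m + 1) → Bool) ↔ x ∈ desList u := by
  rw [desList_cons]
  cases b <;> simp [Nat.one_le_iff_ne_zero.mp hx]

theorem length_desList_mirW (v : Fin m → Bool) :
    (desList (mirW v)).length = (desList v).length := by
  have h := List.filter_map (f := Fin.rev) (p := fun j => v j) (l := List.finRange m)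
  rw [← List.finRange_reverse, List.filter_reverse] at h
  have hlen := congrArg List.length h
  simp only [List.length_reverse, List.length_map] at hlen
  simpa [desList_eq_map_filter, mirW, Function.comp_def] using hlen.symm

theorem mirW_cons (b : Bool) (u : Fin m → Bool) :
    mirW (Fin.cons b u : Fin (m + 1) → Bool) = Fin.snoc (mirW u) b := by
  funext j
  induction j using Fin.lastCases with
  | last => simp [mirW, Fin.rev_last]
  | cast i => simp [mirW, Fin.rev_castSucc]

theorem cmplW_cons (b : Bool) (u : Fin m → Bool) :
    cmplW (Fin.cons b u : Fin (m + 1) → Bool) = Fin.cons (!b) (cmplW u) := by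
  funext j
  induction j using Fin.cases with
  | zero => simp [cmplW]
  | succ i => simp [cmplW]

end desList

section AAset

variable {m : ℕ}

theorem AAset_eq_filterPos (u v : Fin m → Bool) :
    AAset u v = filterPos (· ∉ desList u) (desList v) :=
  rfl

theorem AAset_subset_Icc (u v : Fin m → Bool) : AAset u v ⊆ Finset.Icc 1 (desList v).length :=
  Finset.filter_subset _ _

theorem AAset_snoc (u v : Fin m → Bool) (b c : Bool) :
    AAset (Fin.snoc u b : Fin (m + 1) → Bool) (Fin.snoc v c) =
      if c ∧ !b then insert ((desList v).length + 1) (AAset u v) else AAset u v := by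
  have hv : filterPos (· ∉ desList (Fin.snoc u b : Fin (m + 1) → Bool)) (desList v) =
      AAset u v := by
    rw [AAset_eq_filterPos]
    refine filterPos_congr _ fun x hx => ?_
    have hne : x ≠ m + 1 := by have := le_of_mem_desList hx; omega
    rw [desList_snoc]
    cases b <;> simp [hne]
  rw [AAset_eq_filterPos, desList_snoc c v]
  cases c
  · simpa using hv
  · have hm : m + 1 ∉ desList u := fun h => by have := le_of_mem_desList h; omega
    rw [if_pos rfl, filterPos_append_singleton, hv, desList_snoc]
    cases b <;> simp [hm]

theorem AAset_cons_false (b : Bool) (u v : Fin m → Bool) :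
    AAset (Fin.cons b u : Fin (m + 1) → Bool) (Fin.cons false v) = AAset u v := by
  rw [AAset_eq_filterPos, desList_cons false v, if_neg Bool.false_ne_true, List.nil_append,
    filterPos_map]
  exact filterPos_congr _ fun x hx =>
    not_congr (succ_mem_desList_cons b u (one_le_of_mem_desList hx))

theorem AAset_cons_true (b : Bool) (u v : Fin m → Bool) :
    AAset (Fin.cons b u : Fin (m + 1) → Bool) (Fin.cons true v) =
      (if b then ∅ else {1}) ∪ (AAset u v).image (· + 1) := by
  rw [AAset_eq_filterPos, desList_cons true v, if_pos rfl, List.singleton_append, filterPos_cons,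
    filterPos_map, ← AAset_cons_false b u v, AAset_eq_filterPos, desList_cons false v,
    if_neg Bool.false_ne_true, List.nil_append, filterPos_map]
  have h0 : 0 ∉ desList u := fun h => by have := one_le_of_mem_desList h; omega
  cases b <;> simp [desList_cons, h0]

end AAset

theorem prod_t_AAset_mirW_cons {R : Type*} [CommRing R] (t : ℕ → R) {m : ℕ}
    (b c : Bool) (u v : Fin m → Bool) :
    ∏ k ∈ AAset (mirW (Fin.cons b u : Fin (m + 1) → Bool)) (mirW (Fin.cons c v)), t k =
      (∏ k ∈ AAset (mirW u) (mirW v), t k) *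
        if c ∧ !b then t ((desList v).length + 1) else 1 := by
  rw [mirW_cons, mirW_cons, AAset_snoc, length_desList_mirW]
  split_ifs
  · have hnew : (desList v).length + 1 ∉ AAset (mirW u) (mirW v) := fun h => by
      have := Finset.mem_Icc.1 (AAset_subset_Icc _ _ h)
      rw [length_desList_mirW] at this
      omega
    rw [Finset.prod_insert hnew, mul_comm]
  · rw [mul_one]

theorem prod_q_AAset_cmplW_cons {R : Type*} [CommRing R] (q : ℕ → R) {m : ℕ}
    (b c : Bool) (u v : Fin m → Bool) :
    ∏ l ∈ AAset (cmplW (Fin.cons b u : Fin (m + 1) → Bool)) (cmplW (Fin.cons c v)), q l =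
      if c then ∏ l ∈ AAset (cmplW u) (cmplW v), q l
      else (if b then q 1 else 1) * ∏ l ∈ AAset (cmplW u) (cmplW v), q (l + 1) := by
  rw [cmplW_cons, cmplW_cons]
  cases c
  · have h1 : 1 ∉ (AAset (cmplW u) (cmplW v)).image (· + 1) := fun h => by
      obtain ⟨k, hk, hk1⟩ := Finset.mem_image.1 h
      have := Finset.mem_Icc.1 (AAset_subset_Icc _ _ hk)
      omega
    rw [Bool.not_false, AAset_cons_true]
    cases b <;> simp [h1, Finset.prod_image]
  · rw [Bool.not_true, AAset_cons_false]
    rfl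

/-- the block recursion
`A_n = [[B_{n-1}, A_{n-1}T_{n-1}],[q_1 B_{n-1}, A_{n-1}]]`, where `B_{n-1}` is
`A_{n-1}` with `q_i ↦ q_{i+1}` and `T_{n-1} = diag(t_{ℓ(I)})`.  The four blocks
correspond to the four values of the first letters `b, c` of the two words. -/
theorem stmt_0 {R : Type*} [CommRing R] (m : ℕ) (q t : ℕ → R)
    (b c : Bool) (u v : Fin m → Bool) :
    matA q t (Fin.cons b u) (Fin.cons c v) =
      match b, c with
      | false, false => matA (fun i => q (i+1)) t u v
      | false, true  => matA q t u v * t ((desList v).length + 1)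
      | true , false => q 1 * matA (fun i => q (i+1)) t u v
      | true , true  => matA q t u v := by
  rw [matA, prod_t_AAset_mirW_cons, prod_q_AAset_cmplW_cons]
  cases b <;> cases c <;> simp [matA] <;> ring
end

section
/- The elements 𝒮^I(t;A) := ∑_{J ≤ I} ℛ_J(t;A) form a multiplicative basis: 𝒮^I(t)·𝒮^J(t) = 𝒮^{IJ}(t) for all compositions I, J, where IJ denotes concatenation. Equivalently, the ℛ basis satisfies the ribbon-like product rule ℛ_I ℛ_J = ℛ_{I▷J} + ℛ_{IJ}. -/
open scoped BigOperators

/-- The descent set of a composition `I` of `n`: the partial sums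
`i_1 + ⋯ + i_k` for `1 ≤ k ≤ ℓ(I) - 1`. -/
def desSet {n : ℕ} (I : Composition n) : Finset ℕ :=
  ((List.range (I.length - 1)).map (fun k => (I.blocks.take (k+1)).sum)).toFinset

/-- `𝒜(I,J) = {k < ℓ(J) : j_1 + ⋯ + j_k ∉ Des(I)}`. -/
def AAcomp {n : ℕ} (I J : Composition n) : Finset ℕ :=
  (Finset.Icc 1 (J.length - 1)).filter (fun k => (J.blocks.take k).sum ∉ desSet I)

/-- The `k`-th part (1-indexed) of a composition. -/
def part {n : ℕ} (J : Composition n) (k : ℕ) : ℕ := J.blocks.getD (k-1) 0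

/-- `Sym`, the algebra of noncommutative symmetric functions, realized as the
free associative algebra on the complete functions `S_1, S_2, …`;
`Sgen n` is the generator `S_n`. -/
noncomputable def Sgen (R : Type*) [CommRing R] (n : ℕ) : FreeAlgebra R ℕ :=
  FreeAlgebra.ι R n

/-- `S^J = S_{j_1} ⋯ S_{j_r}` for a list of parts `J`. -/
noncomputable def SJ (R : Type*) [CommRing R] (J : List ℕ) : FreeAlgebra R ℕ :=
  (J.map (Sgen R)).prod

/-- The multiparameter analogue `ℛ_I(t; A)` of the `(1-t)`-transformed ribbon:
`ℛ_I = (-1)^{ℓ(I)} ∑_{J ⊨ n} (-1)^{ℓ(J)} (1 - t_{j_r}) (∏_{k ∈ 𝒜(I,J)} t_{j_k}) S^J`. -/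
noncomputable def Rr {R : Type*} [CommRing R] (t : ℕ → R) {n : ℕ} (I : Composition n) :
    FreeAlgebra R ℕ :=
  ∑ J : Composition n,
    ((-1 : R) ^ I.length * (-1 : R) ^ J.length
        * (1 - t (part J J.length)) * ∏ k ∈ AAcomp I J, t (part J k)) • SJ R J.blocks

/-- `𝒮^I(t) = ∑_{J ≤ I} ℛ_J(t)`, the sum over compositions `J` coarser than `I`. -/
noncomputable def Ss {R : Type*} [CommRing R] (t : ℕ → R) {n : ℕ} (I : Composition n) :
    FreeAlgebra R ℕ :=
  ∑ J ∈ Finset.univ.filter (fun J : Composition n => desSet J ⊆ desSet I), Rr t J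

/-- Concatenation `IJ` of compositions. -/
def concatComp {m n : ℕ} (I : Composition m) (J : Composition n) : Composition (m+n) :=
  ⟨I.blocks ++ J.blocks,
   fun hi => by
      rcases List.mem_append.mp hi with h | h
      · exact I.blocks_pos h
      · exact J.blocks_pos h,
   by rw [List.sum_append, I.blocks_sum, J.blocks_sum]⟩

/-- Near-concatenation `I ▷ J = (i_1, …, i_{r-1}, i_r + j_1, j_2, …, j_s)`. -/
def nearConcat {m n : ℕ} (hm : 0 < m) (hn : 0 < n)
    (I : Composition m) (J : Composition n) : Composition (m+n) := by
  have hI : I.blocks ≠ [] := by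
    intro h
    rw [← I.blocks_sum, h] at hm
    exact absurd hm (by simp)
  have hJ : J.blocks ≠ [] := by
    intro h
    rw [← J.blocks_sum, h] at hn
    exact absurd hn (by simp)
  refine ⟨I.blocks.dropLast ++ (I.blocks.getLast hI + J.blocks.head hJ) :: J.blocks.tail,
    ?_, ?_⟩
  · intro i hi
    rcases List.mem_append.mp hi with h | h
    · exact I.blocks_pos (List.dropLast_subset _ h)
    · rcases List.mem_cons.mp h with h | h
      · subst h
        exact Nat.add_pos_left (I.blocks_pos (List.getLast_mem hI)) _
      · exact J.blocks_pos (List.mem_of_mem_tail h)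
  · have h1 := congrArg List.sum (List.dropLast_append_getLast hI)
    have h2 := congrArg List.sum (List.cons_head_tail (l := J.blocks) hJ)
    rw [I.blocks_sum] at h1
    rw [J.blocks_sum] at h2
    simp only [List.sum_append, List.sum_cons, List.sum_nil, add_zero] at h1 h2
    rw [List.sum_append, List.sum_cons]
    omega


/-!
A composition of `n` is determined by its descent set, and every subset of `(0, n)` occurs
(`compositionEquiv`). Hence every composition of `m + n` is uniquely `P Q` or `P ▷ Q`, according
as `m` is a descent of it or not, and `Des(I ▷ J) ∪ {m} = Des(IJ)`.

Expand `ℛ_I ℛ_J` in the basis `S^M`. For `M = P ▷ Q` the coefficients of `S^M` in `ℛ_{I▷J}` and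
`ℛ_{IJ}` differ only by the sign `(-1)^{ℓ}`, since `m` is never a partial sum of `M`; they
cancel. For `M = P Q` one has `𝒜(IJ, PQ) = 𝒜(I, P) ⊔ (ℓ(P) + 𝒜(J, Q))` and
`𝒜(I ▷ J, PQ) = 𝒜(IJ, PQ) ∪ {ℓ(P)}`, so the two coefficients add up to
`(1 - t_{p_last})` times the rest, i.e. to the product of the coefficients of `S^P` in `ℛ_I` and
of `S^Q` in `ℛ_J`. Summing the rule `ℛ_K ℛ_L = ℛ_{K▷L} + ℛ_{KL}` over `K ≤ I`, `L ≤ J` gives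
`𝒮^I 𝒮^J = 𝒮^{IJ}`, because `K ▷ L ≤ IJ` and `K L ≤ IJ` both mean `K ≤ I` and `L ≤ J`.
-/

namespace NSym

open Finset

variable {m n : ℕ}

lemma sizeUpTo_pos (M : Composition n) {k : ℕ} (hk : 0 < k) (hkM : k ≤ M.length) :
    0 < M.sizeUpTo k :=
  calc 0 = M.sizeUpTo 0 := M.sizeUpTo_zero.symm
    _ < M.sizeUpTo 1 := M.sizeUpTo_strict_mono (by omega)
    _ ≤ M.sizeUpTo k := M.monotone_sizeUpTo hk

lemma sizeUpTo_lt (M : Composition n) {k : ℕ} (hk : k < M.length) : M.sizeUpTo k < n :=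
  (M.sizeUpTo_strict_mono hk).trans_le (M.sizeUpTo_le _)

lemma mem_desSet {M : Composition n} {x : ℕ} :
    x ∈ desSet M ↔ ∃ k, 0 < k ∧ k < M.length ∧ M.sizeUpTo k = x := by
  simp only [desSet, List.mem_toFinset, List.mem_map, List.mem_range]
  constructor
  · rintro ⟨k, hk, rfl⟩
    exact ⟨k + 1, k.succ_pos, by omega, rfl⟩
  · rintro ⟨k, hk, hkM, rfl⟩
    exact ⟨k - 1, by omega, by rw [Nat.sub_add_cancel hk]; rfl⟩

lemma pos_and_lt_of_mem_desSet {M : Composition n} {x : ℕ} (hx : x ∈ desSet M) :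
    0 < x ∧ x < n := by
  obtain ⟨k, hk, hkM, rfl⟩ := mem_desSet.mp hx
  exact ⟨sizeUpTo_pos M hk hkM.le, sizeUpTo_lt M hkM⟩

lemma mem_boundaries_iff (M : Composition n) (x : Fin (n + 1)) :
    x ∈ M.boundaries ↔ (x : ℕ) = 0 ∨ (x : ℕ) = n ∨ (x : ℕ) ∈ desSet M := by
  simp only [Composition.boundaries, Composition.boundary, mem_map, mem_univ, true_and,
    RelEmbedding.coe_toEmbedding, OrderEmbedding.coe_ofStrictMono, Fin.ext_iff, mem_desSet]
  constructor
  · rintro ⟨⟨k, hk⟩, hx⟩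
    rw [← hx]
    rcases Nat.eq_zero_or_pos k with rfl | hk0
    · simp
    rcases Nat.lt_or_ge k M.length with hkM | hkM
    · exact Or.inr (Or.inr ⟨k, hk0, hkM, rfl⟩)
    · exact Or.inr (Or.inl (M.sizeUpTo_ofLength_le k hkM))
  · rintro (hx | hx | ⟨k, -, hkM, hx⟩)
    · exact ⟨0, by simp [hx]⟩
    · exact ⟨Fin.last _, by simp [hx]⟩
    · exact ⟨⟨k, by omega⟩, hx⟩

lemma desSet_injective : Function.Injective (desSet : Composition n → Finset ℕ) := by
  intro M M' h
  apply (compositionEquiv n).injective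
  ext x
  simp only [compositionEquiv, Equiv.coe_fn_mk, Composition.toCompositionAsSet_boundaries,
    mem_boundaries_iff, h]

lemma exists_desSet_eq {S : Finset ℕ} (hS : ∀ x ∈ S, 0 < x ∧ x < n) :
    ∃ M : Composition n, desSet M = S := by
  let c : CompositionAsSet n :=
    { boundaries := univ.filter fun x : Fin (n + 1) => (x : ℕ) = 0 ∨ (x : ℕ) = n ∨ (x : ℕ) ∈ S
      zero_mem := by simp
      getLast_mem := by simp }
  refine ⟨c.toComposition, ?_⟩
  ext x
  constructor
  · intro hx
    obtain ⟨hx0, hxn⟩ := pos_and_lt_of_mem_desSet hx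
    have := (mem_boundaries_iff c.toComposition ⟨x, by omega⟩).mpr (Or.inr (Or.inr hx))
    simp only [CompositionAsSet.toComposition_boundaries, c, mem_filter, mem_univ, true_and]
      at this
    exact (this.resolve_left hx0.ne').resolve_left hxn.ne
  · intro hx
    obtain ⟨hx0, hxn⟩ := hS x hx
    have : (⟨x, by omega⟩ : Fin (n + 1)) ∈ c.toComposition.boundaries := by
      simp [c, hx]
    rw [mem_boundaries_iff] at this
    exact (this.resolve_left hx0.ne').resolve_left hxn.ne

lemma concatComp_blocks (I : Composition m) (J : Composition n) :
    (concatComp I J).blocks = I.blocks ++ J.blocks := rfl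

lemma length_concatComp (I : Composition m) (J : Composition n) :
    (concatComp I J).length = I.length + J.length := by
  simp [Composition.length, concatComp_blocks]

lemma sizeUpTo_concatComp_of_le (I : Composition m) (J : Composition n) {k : ℕ}
    (hk : k ≤ I.length) : (concatComp I J).sizeUpTo k = I.sizeUpTo k := by
  simp [Composition.sizeUpTo, concatComp_blocks, List.take_append, Nat.sub_eq_zero_of_le hk]

lemma sizeUpTo_concatComp_add (I : Composition m) (J : Composition n) (j : ℕ) :
    (concatComp I J).sizeUpTo (I.length + j) = m + J.sizeUpTo j := by
  rw [Composition.sizeUpTo, concatComp_blocks, List.take_append, List.take_of_length_le (by simp),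
    List.sum_append, I.blocks_sum]
  simp [Composition.sizeUpTo]

lemma nearConcat_blocks (hm : 0 < m) (hn : 0 < n) (I : Composition m) (J : Composition n) :
    (nearConcat hm hn I J).blocks =
      I.blocks.dropLast ++ (I.blocks.getLast (I.blocks_eq_nil.not.mpr hm.ne') +
        J.blocks.head (J.blocks_eq_nil.not.mpr hn.ne')) :: J.blocks.tail := rfl

lemma length_nearConcat (hm : 0 < m) (hn : 0 < n) (I : Composition m) (J : Composition n) :
    (nearConcat hm hn I J).length = I.length + J.length - 1 := by
  have hI := I.length_pos_of_pos hm
  have hJ := J.length_pos_of_pos hn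
  simp only [Composition.length, nearConcat_blocks, List.length_append, List.length_dropLast,
    List.length_cons, List.length_tail] at hI hJ ⊢
  omega

lemma sizeUpTo_nearConcat_of_lt (hm : 0 < m) (hn : 0 < n) (I : Composition m)
    (J : Composition n) {k : ℕ} (hk : k < I.length) :
    (nearConcat hm hn I J).sizeUpTo k = I.sizeUpTo k := by
  have hlen : I.blocks.dropLast.length = I.length - 1 := by simp
  rw [Composition.sizeUpTo, nearConcat_blocks, List.take_append, List.sum_append,
    Nat.sub_eq_zero_of_le (by omega), List.take_zero, List.sum_nil, add_zero,
    List.dropLast_eq_take, List.take_take]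
  congr 2
  simp only [Composition.blocks_length]
  omega

lemma sizeUpTo_nearConcat_add (hm : 0 < m) (hn : 0 < n) (I : Composition m)
    (J : Composition n) {j : ℕ} (hj : 0 < j) :
    (nearConcat hm hn I J).sizeUpTo (I.length - 1 + j) = m + J.sizeUpTo j := by
  obtain ⟨j, rfl⟩ : ∃ j', j = j' + 1 := ⟨j - 1, by omega⟩
  have hI : I.blocks ≠ [] := I.blocks_eq_nil.not.mpr hm.ne'
  have hJ : J.blocks ≠ [] := J.blocks_eq_nil.not.mpr hn.ne'
  have hlen : I.blocks.dropLast.length = I.length - 1 := by simp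
  have hsumI := congrArg List.sum (I.blocks.dropLast_append_getLast hI)
  rw [List.sum_append, List.sum_singleton, I.blocks_sum] at hsumI
  rw [Composition.sizeUpTo, Composition.sizeUpTo, nearConcat_blocks, List.take_append,
    List.take_of_length_le (by omega), List.sum_append,
    show I.length - 1 + (j + 1) - I.blocks.dropLast.length = j + 1 by omega,
    List.take_succ_cons, List.sum_cons]
  conv_rhs => rw [← List.cons_head_tail hJ, List.take_succ_cons, List.sum_cons]
  omega

lemma desSet_nearConcat (hm : 0 < m) (hn : 0 < n) (I : Composition m) (J : Composition n) :
    desSet (nearConcat hm hn I J) = desSet I ∪ (desSet J).image (m + ·) := by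
  have hI := I.length_pos_of_pos hm
  have hJ := J.length_pos_of_pos hn
  ext x
  simp only [mem_union, mem_image, mem_desSet, length_nearConcat]
  constructor
  · rintro ⟨k, hk, hkM, rfl⟩
    rcases Nat.lt_or_ge k I.length with hkI | hkI
    · exact .inl ⟨k, hk, hkI, (sizeUpTo_nearConcat_of_lt hm hn I J hkI).symm⟩
    · obtain ⟨j, rfl⟩ : ∃ j, k = I.length - 1 + j := ⟨k - (I.length - 1), by omega⟩
      exact .inr ⟨_, ⟨j, by omega, by omega, rfl⟩,
        (sizeUpTo_nearConcat_add hm hn I J (by omega)).symm⟩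
  · rintro (⟨k, hk, hkI, rfl⟩ | ⟨_, ⟨j, hj, hjJ, rfl⟩, rfl⟩)
    · exact ⟨k, hk, by omega, sizeUpTo_nearConcat_of_lt hm hn I J hkI⟩
    · exact ⟨I.length - 1 + j, by omega, by omega, sizeUpTo_nearConcat_add hm hn I J hj⟩

lemma desSet_concatComp (hm : 0 < m) (hn : 0 < n) (I : Composition m) (J : Composition n) :
    desSet (concatComp I J) = insert m (desSet (nearConcat hm hn I J)) := by
  have hI := I.length_pos_of_pos hm
  have hJ := J.length_pos_of_pos hn
  ext x
  simp only [desSet_nearConcat, mem_insert, mem_union, mem_image, mem_desSet, length_concatComp]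
  constructor
  · rintro ⟨k, hk, hkM, rfl⟩
    rcases lt_trichotomy k I.length with hkI | rfl | hkI
    · exact .inr (.inl ⟨k, hk, hkI, (sizeUpTo_concatComp_of_le I J hkI.le).symm⟩)
    · exact .inl (by rw [sizeUpTo_concatComp_of_le I J le_rfl, I.sizeUpTo_length])
    · obtain ⟨j, rfl⟩ : ∃ j, k = I.length + j := ⟨k - I.length, by omega⟩
      exact .inr (.inr ⟨_, ⟨j, by omega, by omega, rfl⟩, (sizeUpTo_concatComp_add I J j).symm⟩)
  · rintro (rfl | ⟨k, hk, hkI, rfl⟩ | ⟨_, ⟨j, hj, hjJ, rfl⟩, rfl⟩)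
    · exact ⟨I.length, hI, by omega, by rw [sizeUpTo_concatComp_of_le I J le_rfl,
        I.sizeUpTo_length]⟩
    · exact ⟨k, hk, by omega, sizeUpTo_concatComp_of_le I J hkI.le⟩
    · exact ⟨I.length + j, by omega, by omega, sizeUpTo_concatComp_add I J j⟩

lemma mem_desSet_nearConcat_of_lt (hm : 0 < m) (hn : 0 < n) (I : Composition m)
    (J : Composition n) {x : ℕ} (hx : x < m) :
    x ∈ desSet (nearConcat hm hn I J) ↔ x ∈ desSet I := by
  rw [desSet_nearConcat, mem_union, mem_image, or_iff_left]
  rintro ⟨y, hy, rfl⟩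
  omega

lemma add_mem_desSet_nearConcat (hm : 0 < m) (hn : 0 < n) (I : Composition m)
    (J : Composition n) (y : ℕ) :
    m + y ∈ desSet (nearConcat hm hn I J) ↔ y ∈ desSet J := by
  rw [desSet_nearConcat, mem_union, mem_image]
  constructor
  · rintro (h | ⟨z, hz, hzy⟩)
    · exact absurd (pos_and_lt_of_mem_desSet h).2 (by omega)
    · rwa [← Nat.add_left_cancel hzy]
  · exact fun hy => .inr ⟨y, hy, rfl⟩

lemma notMem_desSet_nearConcat (hm : 0 < m) (hn : 0 < n) (I : Composition m) (J : Composition n) :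
    m ∉ desSet (nearConcat hm hn I J) := by
  simpa using (add_mem_desSet_nearConcat hm hn I J 0).not.mpr fun h =>
    (pos_and_lt_of_mem_desSet h).1.ne rfl

lemma mem_desSet_concatComp_of_lt (hm : 0 < m) (hn : 0 < n) (I : Composition m)
    (J : Composition n) {x : ℕ} (hx : x < m) :
    x ∈ desSet (concatComp I J) ↔ x ∈ desSet I := by
  rw [desSet_concatComp hm hn, mem_insert, mem_desSet_nearConcat_of_lt hm hn I J hx]
  exact or_iff_right hx.ne

lemma add_mem_desSet_concatComp (hm : 0 < m) (hn : 0 < n) (I : Composition m)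
    (J : Composition n) {y : ℕ} (hy : 0 < y) :
    m + y ∈ desSet (concatComp I J) ↔ y ∈ desSet J := by
  rw [desSet_concatComp hm hn, mem_insert, add_mem_desSet_nearConcat hm hn]
  exact or_iff_right (by omega)

lemma desSet_nearConcat_subset_iff (hm : 0 < m) (hn : 0 < n) (I K : Composition m)
    (J L : Composition n) :
    desSet (nearConcat hm hn K L) ⊆ desSet (concatComp I J) ↔
      desSet K ⊆ desSet I ∧ desSet L ⊆ desSet J := by
  rw [desSet_nearConcat, union_subset_iff, image_subset_iff]
  refine and_congr (forall₂_congr fun x hx => ?_) (forall₂_congr fun y hy => ?_)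
  · exact mem_desSet_concatComp_of_lt hm hn I J (pos_and_lt_of_mem_desSet hx).2
  · exact add_mem_desSet_concatComp hm hn I J (pos_and_lt_of_mem_desSet hy).1

lemma desSet_concatComp_subset_iff (hm : 0 < m) (hn : 0 < n) (I K : Composition m)
    (J L : Composition n) :
    desSet (concatComp K L) ⊆ desSet (concatComp I J) ↔
      desSet K ⊆ desSet I ∧ desSet L ⊆ desSet J := by
  rw [desSet_concatComp hm hn K L, insert_subset_iff, desSet_nearConcat_subset_iff,
    and_iff_right (desSet_concatComp hm hn I J ▸ mem_insert_self _ _)]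

lemma nearConcat_injective (hm : 0 < m) (hn : 0 < n) :
    Function.Injective fun p : Composition m × Composition n => nearConcat hm hn p.1 p.2 := by
  rintro ⟨P, Q⟩ ⟨P', Q'⟩ h
  have hd := congrArg desSet h
  simp only at hd
  refine Prod.ext (desSet_injective ?_) (desSet_injective ?_)
  · ext x
    by_cases hx : x < m
    · rw [← mem_desSet_nearConcat_of_lt hm hn P Q hx, hd,
        mem_desSet_nearConcat_of_lt hm hn P' Q' hx]
    · exact iff_of_false (fun h => hx (pos_and_lt_of_mem_desSet h).2)
        (fun h => hx (pos_and_lt_of_mem_desSet h).2)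
  · ext y
    rw [← add_mem_desSet_nearConcat hm hn P Q, hd, add_mem_desSet_nearConcat]

lemma concatComp_injective (hm : 0 < m) (hn : 0 < n) :
    Function.Injective fun p : Composition m × Composition n => concatComp p.1 p.2 := by
  intro p p' h
  have hd := congrArg desSet h
  simp only [desSet_concatComp hm hn] at hd
  refine nearConcat_injective hm hn (desSet_injective ?_)
  rw [← erase_insert (notMem_desSet_nearConcat hm hn p.1 p.2), hd,
    erase_insert (notMem_desSet_nearConcat hm hn p'.1 p'.2)]

lemma exists_nearConcat_eq (hm : 0 < m) (hn : 0 < n) {M : Composition (m + n)}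
    (hM : m ∉ desSet M) :
    ∃ p : Composition m × Composition n, nearConcat hm hn p.1 p.2 = M := by
  obtain ⟨P, hP⟩ := exists_desSet_eq (n := m) (S := (desSet M).filter (· < m)) fun x hx => by
    rw [mem_filter] at hx
    exact ⟨(pos_and_lt_of_mem_desSet hx.1).1, hx.2⟩
  obtain ⟨Q, hQ⟩ := exists_desSet_eq (n := n)
      (S := ((desSet M).filter (m < ·)).image (· - m)) fun y hy => by
    obtain ⟨x, hx, rfl⟩ := mem_image.mp hy
    rw [mem_filter] at hx
    have := (pos_and_lt_of_mem_desSet hx.1).2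
    omega
  refine ⟨(P, Q), desSet_injective ?_⟩
  ext x
  rcases lt_trichotomy x m with hx | rfl | hx
  · rw [mem_desSet_nearConcat_of_lt hm hn P Q hx, hP, mem_filter]
    exact and_iff_left hx
  · exact iff_of_false (notMem_desSet_nearConcat hm hn P Q) hM
  · obtain ⟨y, rfl⟩ := Nat.exists_eq_add_of_lt hx
    rw [add_assoc, add_mem_desSet_nearConcat, hQ, mem_image]
    constructor
    · rintro ⟨z, hz, hzy⟩
      rw [mem_filter] at hz
      rw [show m + (y + 1) = z by omega]
      exact hz.1
    · exact fun h => ⟨_, mem_filter.mpr ⟨h, by omega⟩, by omega⟩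

lemma exists_concatComp_eq (hm : 0 < m) (hn : 0 < n) {M : Composition (m + n)}
    (hM : m ∈ desSet M) :
    ∃ p : Composition m × Composition n, concatComp p.1 p.2 = M := by
  obtain ⟨M', hM'⟩ := exists_desSet_eq (S := (desSet M).erase m) fun x hx =>
    pos_and_lt_of_mem_desSet (mem_of_mem_erase hx)
  obtain ⟨p, hp⟩ := exists_nearConcat_eq hm hn (M := M') (by simp [hM'])
  refine ⟨p, desSet_injective ?_⟩
  rw [desSet_concatComp hm hn, hp, hM', insert_erase hM]

lemma bijective_sumElim_nearConcat_concatComp (hm : 0 < m) (hn : 0 < n) :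
    Function.Bijective
      (Sum.elim (fun p : Composition m × Composition n => nearConcat hm hn p.1 p.2)
        (fun p : Composition m × Composition n => concatComp p.1 p.2)) := by
  refine ⟨(nearConcat_injective hm hn).sumElim (concatComp_injective hm hn) ?_, fun M => ?_⟩
  · intro p p' h
    apply notMem_desSet_nearConcat hm hn p.1 p.2
    rw [h, desSet_concatComp hm hn]
    exact mem_insert_self _ _
  · by_cases hM : m ∈ desSet M
    · obtain ⟨p, hp⟩ := exists_concatComp_eq hm hn hM
      exact ⟨.inr p, hp⟩
    · obtain ⟨p, hp⟩ := exists_nearConcat_eq hm hn hM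
      exact ⟨.inl p, hp⟩

lemma sum_compositions_add_eq (hm : 0 < m) (hn : 0 < n) {β : Type*} [AddCommMonoid β]
    (f : Composition (m + n) → β) :
    ∑ M, f M = ∑ p : Composition m × Composition n, f (nearConcat hm hn p.1 p.2) +
      ∑ p : Composition m × Composition n, f (concatComp p.1 p.2) :=
  (Fintype.sum_bijective _ (bijective_sumElim_nearConcat_concatComp hm hn) _ f
    fun _ => rfl).symm.trans (Fintype.sum_sum_type _)

lemma mem_AAcomp {N : ℕ} {X M : Composition N} {k : ℕ} :
    k ∈ AAcomp X M ↔ 0 < k ∧ k < M.length ∧ M.sizeUpTo k ∉ desSet X := by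
  simp only [AAcomp, mem_filter, mem_Icc, Composition.sizeUpTo]
  exact ⟨fun ⟨⟨h1, h2⟩, h3⟩ => ⟨h1, by omega, h3⟩, fun ⟨h1, h2, h3⟩ => ⟨⟨h1, by omega⟩, h3⟩⟩

lemma AAcomp_nearConcat_of_notMem (hm : 0 < m) (hn : 0 < n) (I : Composition m)
    (J : Composition n) {M : Composition (m + n)} (hM : m ∉ desSet M) :
    AAcomp (nearConcat hm hn I J) M = AAcomp (concatComp I J) M := by
  ext k
  simp only [mem_AAcomp, desSet_concatComp hm hn, mem_insert, not_or, and_congr_right_iff]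
  exact fun hk hkM => (and_iff_right fun h => hM (mem_desSet.mpr ⟨k, hk, hkM, h⟩)).symm

lemma AAcomp_concatComp_concatComp (hm : 0 < m) (hn : 0 < n) (I P : Composition m)
    (J Q : Composition n) :
    AAcomp (concatComp I J) (concatComp P Q) =
      AAcomp I P ∪ (AAcomp J Q).image (P.length + ·) := by
  ext k
  simp only [mem_union, mem_image, mem_AAcomp, length_concatComp]
  rcases lt_trichotomy k P.length with hk | rfl | hk
  · rw [sizeUpTo_concatComp_of_le P Q hk.le,
      mem_desSet_concatComp_of_lt hm hn I J (sizeUpTo_lt P hk)]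
    constructor
    · exact fun h => .inl ⟨h.1, hk, h.2.2⟩
    · rintro (h | ⟨j, hj, rfl⟩)
      · exact ⟨h.1, by omega, h.2.2⟩
      · omega
  · rw [sizeUpTo_concatComp_of_le P Q le_rfl, P.sizeUpTo_length, desSet_concatComp hm hn]
    refine iff_of_false (fun h => h.2.2 (mem_insert_self _ _)) ?_
    rintro (h | ⟨j, hj, hjk⟩) <;> omega
  · obtain ⟨j, rfl⟩ : ∃ j, k = P.length + j := ⟨k - P.length, by omega⟩
    constructor
    · rintro ⟨-, hjQ, hnot⟩
      rw [sizeUpTo_concatComp_add, add_mem_desSet_concatComp hm hn I J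
        (sizeUpTo_pos Q (k := j) (by omega) (by omega))] at hnot
      exact .inr ⟨j, ⟨by omega, by omega, hnot⟩, rfl⟩
    · rintro (h | ⟨j', ⟨hj', hj'Q, hnot⟩, hjj⟩)
      · omega
      · obtain rfl : j' = j := by omega
        rw [sizeUpTo_concatComp_add, add_mem_desSet_concatComp hm hn I J
          (sizeUpTo_pos Q hj' hj'Q.le)]
        exact ⟨by omega, by omega, hnot⟩

lemma AAcomp_nearConcat_concatComp (hm : 0 < m) (hn : 0 < n) (I P : Composition m)
    (J Q : Composition n) :
    AAcomp (nearConcat hm hn I J) (concatComp P Q) =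
      insert P.length (AAcomp (concatComp I J) (concatComp P Q)) := by
  ext k
  simp only [mem_insert, mem_AAcomp, length_concatComp, desSet_concatComp hm hn, not_or]
  have hP := P.length_pos_of_pos hm
  have hQ := Q.length_pos_of_pos hn
  rcases lt_trichotomy k P.length with hk | rfl | hk
  · have := sizeUpTo_lt P hk
    rw [sizeUpTo_concatComp_of_le P Q hk.le]
    simp only [hk.ne, this.ne, false_or, true_and, not_false_eq_true]
  · rw [sizeUpTo_concatComp_of_le P Q le_rfl, P.sizeUpTo_length]
    simp [hP, hQ, notMem_desSet_nearConcat hm hn]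
  · obtain ⟨j, rfl⟩ : ∃ j, k = P.length + j := ⟨k - P.length, by omega⟩
    by_cases hjQ : j < Q.length
    · have := sizeUpTo_pos Q (k := j) (by omega) hjQ.le
      rw [sizeUpTo_concatComp_add]
      simp only [hk.ne', false_or, Nat.add_eq_left, this.ne', not_false_eq_true, true_and]
    · omega

lemma part_concatComp_of_le (P : Composition m) (Q : Composition n) {k : ℕ} (hk : 0 < k)
    (hkP : k ≤ P.length) : part (concatComp P Q) k = part P k := by
  rw [part, part, concatComp_blocks, List.getD_append]
  simp only [Composition.blocks_length]
  omega

lemma part_concatComp_add (P : Composition m) (Q : Composition n) {j : ℕ} (hj : 0 < j) :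
    part (concatComp P Q) (P.length + j) = part Q j := by
  have hlen : P.blocks.length = P.length := P.blocks_length
  rw [part, part, concatComp_blocks, List.getD_append_right _ _ _ _ (by omega)]
  congr 1
  omega

lemma neg_one_pow_length_nearConcat {R : Type*} [Ring R] (hm : 0 < m) (hn : 0 < n)
    (I : Composition m) (J : Composition n) :
    (-1 : R) ^ (nearConcat hm hn I J).length = -(-1) ^ (concatComp I J).length := by
  have hI := I.length_pos_of_pos hm
  obtain ⟨a, ha⟩ : ∃ a, I.length = a + 1 := ⟨I.length - 1, by omega⟩
  rw [length_nearConcat, length_concatComp, ha, show a + 1 + J.length - 1 = a + J.length by omega,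
    add_right_comm, pow_succ, mul_neg_one, neg_neg]

section Coefficients

variable {R : Type*} [CommRing R]

lemma SJ_append (l₁ l₂ : List ℕ) : SJ R (l₁ ++ l₂) = SJ R l₁ * SJ R l₂ := by
  simp [SJ]

noncomputable def ribbonCoeff (t : ℕ → R) {N : ℕ} (X M : Composition N) : R :=
  (-1) ^ X.length * (-1) ^ M.length * (1 - t (part M M.length)) * ∏ k ∈ AAcomp X M, t (part M k)

lemma Rr_eq_sum_ribbonCoeff (t : ℕ → R) {N : ℕ} (X : Composition N) :
    Rr t X = ∑ M, ribbonCoeff t X M • SJ R M.blocks := rfl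

lemma prod_AAcomp_concatComp (t : ℕ → R) (hm : 0 < m) (hn : 0 < n) (I P : Composition m)
    (J Q : Composition n) :
    ∏ k ∈ AAcomp (concatComp I J) (concatComp P Q), t (part (concatComp P Q) k) =
      (∏ k ∈ AAcomp I P, t (part P k)) * ∏ k ∈ AAcomp J Q, t (part Q k) := by
  rw [AAcomp_concatComp_concatComp hm hn, prod_union, prod_image (by simp)]
  · congr 1
    · refine prod_congr rfl fun k hk => ?_
      obtain ⟨hk0, hkP, -⟩ := mem_AAcomp.mp hk
      rw [part_concatComp_of_le P Q hk0 hkP.le]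
    · exact prod_congr rfl fun j hj => by rw [part_concatComp_add P Q (mem_AAcomp.mp hj).1]
  · rw [disjoint_left]
    intro k hk hk'
    obtain ⟨j, -, rfl⟩ := mem_image.mp hk'
    have := (mem_AAcomp.mp hk).2.1
    omega

lemma ribbonCoeff_mul_ribbonCoeff (t : ℕ → R) (hm : 0 < m) (hn : 0 < n) (I P : Composition m)
    (J Q : Composition n) :
    ribbonCoeff t I P * ribbonCoeff t J Q =
      ribbonCoeff t (nearConcat hm hn I J) (concatComp P Q) +
        ribbonCoeff t (concatComp I J) (concatComp P Q) := by
  have hP := P.length_pos_of_pos hm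
  have hQ := Q.length_pos_of_pos hn
  have hnotMem : P.length ∉ AAcomp (concatComp I J) (concatComp P Q) := by
    rw [mem_AAcomp, sizeUpTo_concatComp_of_le P Q le_rfl, P.sizeUpTo_length,
      desSet_concatComp hm hn]
    exact fun h => h.2.2 (mem_insert_self _ _)
  have hlast : part (concatComp P Q) (concatComp P Q).length = part Q Q.length := by
    rw [length_concatComp, part_concatComp_add P Q hQ]
  unfold ribbonCoeff
  rw [AAcomp_nearConcat_concatComp hm hn, prod_insert hnotMem, prod_AAcomp_concatComp t hm hn,
    neg_one_pow_length_nearConcat, hlast, part_concatComp_of_le P Q hP le_rfl, length_concatComp,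
    length_concatComp]
  ring

lemma ribbonCoeff_nearConcat_add_ribbonCoeff_concatComp (t : ℕ → R) (hm : 0 < m) (hn : 0 < n)
    (I : Composition m) (J : Composition n) {M : Composition (m + n)} (hM : m ∉ desSet M) :
    ribbonCoeff t (nearConcat hm hn I J) M + ribbonCoeff t (concatComp I J) M = 0 := by
  unfold ribbonCoeff
  rw [AAcomp_nearConcat_of_notMem hm hn I J hM, neg_one_pow_length_nearConcat]
  ring

theorem Rr_mul_Rr (t : ℕ → R) (hm : 0 < m) (hn : 0 < n) (I : Composition m)
    (J : Composition n) :
    Rr t I * Rr t J = Rr t (nearConcat hm hn I J) + Rr t (concatComp I J) := by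
  simp only [Rr_eq_sum_ribbonCoeff, ← sum_add_distrib, ← add_smul]
  rw [sum_compositions_add_eq hm hn, sum_mul_sum, ← Fintype.sum_prod_type']
  simp only [ribbonCoeff_nearConcat_add_ribbonCoeff_concatComp t hm hn I J
    (notMem_desSet_nearConcat hm hn _ _), zero_smul, sum_const_zero, zero_add,
    ← ribbonCoeff_mul_ribbonCoeff t hm hn, smul_mul_smul_comm, concatComp_blocks, SJ_append]

theorem Ss_mul_Ss (t : ℕ → R) (hm : 0 < m) (hn : 0 < n) (I : Composition m)
    (J : Composition n) :
    Ss t I * Ss t J = Ss t (concatComp I J) := by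
  have hprod : (univ.filter fun K : Composition m => desSet K ⊆ desSet I) ×ˢ
      (univ.filter fun L : Composition n => desSet L ⊆ desSet J) =
        univ.filter fun p => desSet p.1 ⊆ desSet I ∧ desSet p.2 ⊆ desSet J := by
    rw [← filter_product, univ_product_univ]
  rw [Ss, Ss, Ss, sum_mul_sum, ← sum_product', hprod, sum_filter, sum_filter,
    sum_compositions_add_eq hm hn, ← sum_add_distrib]
  refine sum_congr rfl fun p _ => ?_
  simp only [desSet_nearConcat_subset_iff, desSet_concatComp_subset_iff hm hn,
    Rr_mul_Rr t hm hn]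
  rw [ite_add_ite, add_zero]

end Coefficients

end NSym

/-- the `𝒮`-basis is multiplicative, `𝒮^I(t)·𝒮^J(t) = 𝒮^{IJ}(t)`;
equivalently, the `ℛ`-basis satisfies the ribbon-like product rule
`ℛ_I ℛ_J = ℛ_{I▷J} + ℛ_{IJ}`. -/
theorem stmt_3 {R : Type*} [CommRing R] (t : ℕ → R) {m n : ℕ} (hm : 0 < m) (hn : 0 < n)
    (I : Composition m) (J : Composition n) :
    Ss t I * Ss t J = Ss t (concatComp I J) ∧
    Rr t I * Rr t J = Rr t (nearConcat hm hn I J) + Rr t (concatComp I J) :=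
  ⟨NSym.Ss_mul_Ss t hm hn I J, NSym.Rr_mul_Rr t hm hn I J⟩
end

section
/- Let P_I := K_n(1^{n-1}, Y_I) and Q_I := L_n(Y^I, 1^{n-1}) where the parameter sequences are built from the boolean encoding: for I with boolean descent word u = (u_1,...,u_{n-1}), Y_I = (y_{u_1}, y_{u_1u_2}, ..., y_{u_1...u_{n-1}}) and Y^I = (y_{w_1},...,y_{w_{1...n-1}}) with w_{1...k} = u_1...u_{k-1}(1-u_k). Then ⟨Q_I, P_J⟩ = ∏_{k=1}^{n-1} (y^k(I) - y_k(J)), which vanishes if and only if I ≠ J (assuming all parameters y_u at distinct boolean words with a common prefix differing in the last letter are distinct). -/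
/-!
Expanding a product of linear factors `a i + b i • η_i` in the basis `η_D` and pairing it with
another one, biorthogonality of the `η_D` leaves `∑_D ∏_{i ∉ D} a i c i ∏_{i ∈ D} b i d i`, which
factors as `∏ i, (a i c i + b i d i)`. For `Q_I` and `P_J` the `k`-th factor is
`y^k(I) - y_k(J)`. When `I = J` each factor compares the two children of a common prefix, so it
is nonzero; when `I ≠ J`, at the first letter where `u` and `v` differ the sibling of `u`'s
prefix is `v`'s prefix, and that factor vanishes.
-/

/-- The Grassmann generator `η_i` in the exterior algebra on the free module
`Fin N → R`. -/
noncomputable def etaF (R : Type*) [CommRing R] {N : ℕ} (i : Fin N) :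
    ExteriorAlgebra R (Fin N → R) :=
  ExteriorAlgebra.ι R (Pi.single i 1)

/-- `η_D = η_{d_1} ⋯ η_{d_k}` for `D = {d_1 < ⋯ < d_k}`. -/
noncomputable def etaDF (R : Type*) [CommRing R] {N : ℕ} (D : Finset (Fin N)) :
    ExteriorAlgebra R (Fin N → R) :=
  ((D.sort (· ≤ ·)).map (etaF R)).prod

/-- `K_n(U,V) = (u_1 + v_1 η_1) ⋯ (u_{n-1} + v_{n-1} η_{n-1})` (here `N = n-1`). -/
noncomputable def Kn {R : Type*} [CommRing R] {N : ℕ} (u v : Fin N → R) :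
    ExteriorAlgebra R (Fin N → R) :=
  ((List.finRange N).map
    (fun i => algebraMap R (ExteriorAlgebra R (Fin N → R)) (u i) + v i • etaF R i)).prod

/-- `L_n(X,Y) = (y_1 - x_1 ξ_1) ⋯ (y_{n-1} - x_{n-1} ξ_{n-1})` (here `N = n-1`,
in the exterior algebra on the dual generators `ξ_i`, modelled by the same kind
of exterior algebra). -/
noncomputable def Ln {R : Type*} [CommRing R] {N : ℕ} (x y : Fin N → R) :
    ExteriorAlgebra R (Fin N → R) :=
  ((List.finRange N).map
    (fun i => algebraMap R (ExteriorAlgebra R (Fin N → R)) (y i) - x i • etaF R i)).prod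

/-- The prefix `u_1 u_2 ⋯ u_k` (as a `List Bool`) of the boolean word
`u : Fin N → Bool` encoding a composition (`u i = true` iff `i+1` is a descent). -/
def wordPrefix {N : ℕ} (u : Fin N → Bool) (k : ℕ) : List Bool :=
  ((List.finRange N).map u).take k

/-- `P_I = K_n(1^{n-1}, Y_I)` with `Y_I = (y_{u_1}, y_{u_1u_2}, …, y_u)`. -/
noncomputable def Pel {R : Type*} [CommRing R] {N : ℕ} (y : List Bool → R)
    (u : Fin N → Bool) : ExteriorAlgebra R (Fin N → R) :=
  Kn (fun _ => 1) (fun k => y (wordPrefix u ((k : ℕ) + 1)))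

/-- `Q_I = (y_{w_1} - ξ_1) ⋯ (y_{w_{1…n-1}} - ξ_{n-1})` with
`w_{1…k} = u_1 ⋯ u_{k-1} (1 - u_k)`. -/
noncomputable def Qel {R : Type*} [CommRing R] {N : ℕ} (y : List Bool → R)
    (u : Fin N → Bool) : ExteriorAlgebra R (Fin N → R) :=
  Ln (fun _ => 1) (fun k => y (wordPrefix u (k : ℕ) ++ [! u k]))

section ExteriorExpansion

variable {R : Type*} [CommRing R] {N : ℕ}

lemma etaDF_insert {i : Fin N} {D : Finset (Fin N)} (h : ∀ j ∈ D, i < j) :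
    etaDF R (insert i D) = etaF R i * etaDF R D := by
  have hi : i ∉ D := fun hi => (h i hi).false
  rw [etaDF, Finset.sort_insert _ (fun j hj => (h j hj).le) hi, List.map_cons, List.prod_cons]
  rfl

lemma list_prod_map_algebraMap_add_smul_etaF (a b : Fin N → R) {L : List (Fin N)}
    (hL : L.Pairwise (· < ·)) :
    (L.map fun i => algebraMap R _ (a i) + b i • etaF R i).prod =
      ∑ D ∈ L.toFinset.powerset, ((∏ i ∈ L.toFinset \ D, a i) * ∏ i ∈ D, b i) • etaDF R D := by
  induction L with
  | nil => simp [etaDF]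
  | cons i L ih =>
    obtain ⟨hiL, hL⟩ := List.pairwise_cons.mp hL
    have hi : i ∉ L.toFinset := fun hi => (hiL i (List.mem_toFinset.mp hi)).false
    rw [List.map_cons, List.prod_cons, ih hL, List.toFinset_cons,
      Finset.sum_powerset_insert hi, add_mul, Finset.mul_sum, Finset.mul_sum]
    congr 1
    · refine Finset.sum_congr rfl fun D hD => ?_
      have hiD : i ∉ D := fun h => hi (Finset.mem_powerset.mp hD h)
      rw [Finset.insert_sdiff_of_notMem _ hiD,
        Finset.prod_insert fun h => hi (Finset.mem_sdiff.mp h).1, Algebra.smul_def,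
        Algebra.smul_def, ← mul_assoc, ← map_mul, mul_assoc]
    · refine Finset.sum_congr rfl fun D hD => ?_
      have hDL := Finset.mem_powerset.mp hD
      have hlt : ∀ j ∈ D, i < j := fun j hj => hiL j (List.mem_toFinset.mp (hDL hj))
      rw [etaDF_insert hlt, Finset.prod_insert fun h => hi (hDL h), Finset.insert_sdiff_insert,
        Finset.sdiff_insert_of_notMem hi, smul_mul_assoc, mul_smul_comm, smul_smul]
      congr 1
      ring

lemma Kn_eq_sum (a b : Fin N → R) :
    Kn a b = ∑ D : Finset (Fin N), ((∏ i ∈ Dᶜ, a i) * ∏ i ∈ D, b i) • etaDF R D := by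
  simpa [Kn, Finset.compl_eq_univ_sdiff] using
    list_prod_map_algebraMap_add_smul_etaF a b (List.pairwise_lt_finRange N)

lemma Ln_eq_Kn (x y : Fin N → R) : Ln x y = Kn y (-x) := by
  simp [Ln, Kn, sub_eq_add_neg]

lemma pairing_Kn_Kn
    (B : ExteriorAlgebra R (Fin N → R) →ₗ[R] ExteriorAlgebra R (Fin N → R) →ₗ[R] R)
    (hB : ∀ D E : Finset (Fin N), B (etaDF R D) (etaDF R E) = if D = E then 1 else 0)
    (a b c d : Fin N → R) :
    B (Kn a b) (Kn c d) = ∏ i, (a i * c i + b i * d i) := by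
  simp_rw [Kn_eq_sum, map_sum, LinearMap.sum_apply, map_smul, LinearMap.smul_apply, hB,
    smul_eq_mul, mul_ite, mul_one, mul_zero, Finset.sum_ite_eq', Finset.mem_univ, if_true,
    add_comm (a _ * c _), Fintype.prod_add, Finset.prod_mul_distrib]
  exact Finset.sum_congr rfl fun D _ => by ring

end ExteriorExpansion

section WordPrefix

variable {N : ℕ}

lemma wordPrefix_succ (u : Fin N → Bool) (k : Fin N) :
    wordPrefix u (k + 1) = wordPrefix u k ++ [u k] := by
  simp [wordPrefix, List.take_add_one]

lemma wordPrefix_congr {u v : Fin N → Bool} {k : ℕ} (h : ∀ j : Fin N, j < k → u j = v j) :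
    wordPrefix u k = wordPrefix v k := by
  refine List.ext_getElem (by simp [wordPrefix]) fun n hu _ => ?_
  simp only [wordPrefix, List.length_take, List.length_map, List.length_finRange,
    lt_min_iff] at hu
  simpa [wordPrefix] using h ⟨n, hu.2⟩ hu.1

lemma exists_wordPrefix_append_not_eq_of_ne {u v : Fin N → Bool} (huv : u ≠ v) :
    ∃ k : Fin N, wordPrefix u k ++ [!u k] = wordPrefix v (k + 1) := by
  obtain ⟨k, hk, hmin⟩ := wellFounded_lt.has_min {k | u k ≠ v k} (Function.ne_iff.mp huv)
  have hprefix : wordPrefix u k = wordPrefix v k :=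
    wordPrefix_congr fun j hj => not_not.mp fun hne => hmin j hne hj
  refine ⟨k, ?_⟩
  rw [wordPrefix_succ, hprefix, Bool.eq_not.mpr hk, Bool.not_not]

end WordPrefix

/-- biorthogonality of the bases `(P_I)`, `(Q_I)`:
`⟨Q_I, P_J⟩ = ∏_{k=1}^{n-1} (y^k(I) - y_k(J))`, which vanishes if and only if
`I ≠ J`, assuming the parameters at sibling boolean words (same prefix,
different last letter) are distinct. -/
theorem stmt_8 {R : Type*} [CommRing R] [IsDomain R] {N : ℕ}
    (B : ExteriorAlgebra R (Fin N → R) →ₗ[R] ExteriorAlgebra R (Fin N → R) →ₗ[R] R)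
    (hB : ∀ D E : Finset (Fin N), B (etaDF R D) (etaDF R E) = if D = E then 1 else 0)
    (y : List Bool → R) (u v : Fin N → Bool) :
    B (Qel y u) (Pel y v) =
      ∏ k : Fin N, (y (wordPrefix u (k : ℕ) ++ [! u k]) - y (wordPrefix v ((k : ℕ) + 1)))
    ∧ ((∀ l : List Bool, y (l ++ [true]) ≠ y (l ++ [false])) →
        (B (Qel y u) (Pel y v) = 0 ↔ u ≠ v)) := by
  have hpairing : B (Qel y u) (Pel y v) =
      ∏ k : Fin N, (y (wordPrefix u (k : ℕ) ++ [! u k]) - y (wordPrefix v ((k : ℕ) + 1))) := by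
    simp only [Qel, Pel, Ln_eq_Kn, pairing_Kn_Kn B hB, Pi.neg_apply, mul_one, neg_one_mul,
      ← sub_eq_add_neg]
  refine ⟨hpairing, fun hy => ?_⟩
  rw [hpairing, Finset.prod_eq_zero_iff]
  constructor
  · rintro ⟨k, -, hk⟩ rfl
    rw [wordPrefix_succ, sub_eq_zero] at hk
    cases huk : u k <;> rw [huk] at hk
    exacts [hy _ hk, hy _ hk.symm]
  · intro huv
    obtain ⟨k, hk⟩ := exists_wordPrefix_append_not_eq_of_ne huv
    exact ⟨k, Finset.mem_univ k, by rw [hk, sub_self]⟩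
end

section
/- In the exterior algebra on η_1,...,η_{n-1}, the elements 𝒬'_I = K_n(U_I, 0^{n-1}) (products ∏_{j∈Des(I)}(t_{c(j)} + η_j) with c(j) = ℓ(I)+1-r(j)) satisfy: for a one-part element 𝒬'_i and arbitrary 𝒬'_J, 𝒬'_i · 𝒬'_J-shifted = (1 - t_{ℓ(J)}) 𝒬'_{i▷J} + 𝒬'_{i·J}, where the shift replaces each η_k in 𝒬'_J by η_{k+i}. -/
/-- The Grassmann generator `η_j` (`j ≥ 1` a cell position), in the exterior
algebra on the free module `ℕ → R`. -/
noncomputable def etaN (R : Type*) [CommRing R] (j : ℕ) : ExteriorAlgebra R (ℕ → R) :=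
  ExteriorAlgebra.ι R (Pi.single j 1)

/-- `η_D = η_{d_1} ⋯ η_{d_k}` for `D = {d_1 < ⋯ < d_k}`. -/
noncomputable def etaDN (R : Type*) [CommRing R] (D : Finset ℕ) :
    ExteriorAlgebra R (ℕ → R) :=
  ((D.sort (· ≤ ·)).map (etaN R)).prod

/-- `r(j)`: the row index of the cell `j` in the ribbon diagram of the
composition with descent set `D` (rows counted from the top; the descent cell
is counted with the row it turns into). -/
def rowIdx (D : Finset ℕ) (j : ℕ) : ℕ := 1 + (D.filter (· ≤ j)).card

/-- `c(j) = ℓ(I) + 1 - r(j)`, for `I` the composition with descent set `D`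
(so `ℓ(I) = D.card + 1`). -/
def cvalP (D : Finset ℕ) (j : ℕ) : ℕ := (D.card + 1) + 1 - rowIdx D j

/-- `𝒬'_I = ∏_{j ∈ Des(I)} (t_{c(j)} + η_j)` (ordered product, increasing `j`),
for `I` the composition with descent set `D`. -/
noncomputable def Qp (R : Type*) [CommRing R] (t : ℕ → R) (D : Finset ℕ) :
    ExteriorAlgebra R (ℕ → R) :=
  ((D.sort (· ≤ ·)).map
    (fun j => algebraMap R (ExteriorAlgebra R (ℕ → R)) (t (cvalP D j)) + etaN R j)).prod

/-
Prepending a descent `i` smaller than every descent of `D` adds one factor `t_{ℓ} + η_i` in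
front of `𝒬'_D`, where `ℓ = |D| + 1` is the length of the composition with descent set `D`;
the other factors keep their parameters because every row index and the length both go up
by one. Writing `1 + η_i = (1 - t_ℓ) + (t_ℓ + η_i)` then splits `(1 + η_i) 𝒬'_D` into the two
terms.
-/

theorem cvalP_insert_self {D : Finset ℕ} {i : ℕ} (hlt : ∀ d ∈ D, i < d) :
    cvalP (insert i D) i = D.card + 1 := by
  have hi : i ∉ D := fun h => lt_irrefl i (hlt i h)
  have hfilter : (insert i D).filter (· ≤ i) = {i} := by
    ext x
    simp only [Finset.mem_filter, Finset.mem_insert, Finset.mem_singleton]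
    constructor
    · rintro ⟨rfl | hx, hxi⟩
      · rfl
      · exact absurd hxi (hlt x hx).not_ge
    · rintro rfl
      exact ⟨Or.inl rfl, le_rfl⟩
  simp [cvalP, rowIdx, hfilter, Finset.card_insert_of_notMem hi]

theorem cvalP_insert_of_le {D : Finset ℕ} {i j : ℕ} (hi : i ∉ D) (hij : i ≤ j) :
    cvalP (insert i D) j = cvalP D j := by
  have hi' : i ∉ D.filter (· ≤ j) := fun h => hi (Finset.mem_filter.mp h).1
  have hle : (D.filter (· ≤ j)).card ≤ D.card := Finset.card_filter_le _ _
  simp only [cvalP, rowIdx, Finset.filter_insert, if_pos hij,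
    Finset.card_insert_of_notMem hi, Finset.card_insert_of_notMem hi']
  omega

theorem Qp_empty (R : Type*) [CommRing R] (t : ℕ → R) : Qp R t ∅ = 1 := by
  simp [Qp]

theorem Qp_insert_of_forall_lt {R : Type*} [CommRing R] (t : ℕ → R) {D : Finset ℕ} {i : ℕ}
    (hlt : ∀ d ∈ D, i < d) :
    Qp R t (insert i D) =
      (algebraMap R (ExteriorAlgebra R (ℕ → R)) (t (D.card + 1)) + etaN R i) * Qp R t D := by
  have hi : i ∉ D := fun h => lt_irrefl i (hlt i h)
  have hsort : (insert i D).sort (· ≤ ·) = i :: D.sort (· ≤ ·) :=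
    Finset.sort_insert _ (fun d hd => (hlt d hd).le) hi
  rw [Qp, hsort, List.map_cons, List.prod_cons, cvalP_insert_self hlt, Qp]
  congr 1
  refine congrArg List.prod (List.map_congr_left fun j hj => ?_)
  rw [cvalP_insert_of_le hi (hlt j ((Finset.mem_sort _).mp hj)).le]

/-- `J` is encoded by its descent set `E`; its shift by `i` has descent set `E + i`, which is
also `Des(i▷J)`, while `Des(i·J) = {i} ∪ (E + i)` and `ℓ(J) = |E| + 1`. The product with
`𝒬'_i = 𝒬'_∅ = 1` is realized in the Grassmann model as `x · (1 + η_i) · shift(y)`. -/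
theorem stmt_10_general {R : Type*} [CommRing R] (t : ℕ → R) (i n : ℕ)
    (E : Finset ℕ) (hE : E ⊆ Finset.Icc 1 (n-1)) :
    Qp R t (∅ : Finset ℕ) * ((1 + etaN R i) * Qp R t (E.image (· + i))) =
      (1 - t (E.card + 1)) • Qp R t (E.image (· + i))
        + Qp R t (insert i (E.image (· + i))) := by
  have hlt : ∀ d ∈ E.image (· + i), i < d := by
    simp only [Finset.forall_mem_image]
    intro e he
    have := (Finset.mem_Icc.mp (hE he)).1
    omega
  rw [Qp_empty, one_mul, Qp_insert_of_forall_lt t hlt,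
    Finset.card_image_of_injective _ (add_left_injective i), add_mul, add_mul, one_mul,
    sub_smul, one_smul, Algebra.smul_def]
  abel

/-- the product of a one-part `𝒬'_i` (which is the empty product
`𝒬'_∅ = 1`) with the shift of `𝒬'_J` by `i` (replacing each `η_k` by
`η_{k+i}`, i.e. with descent set `E + i`), the product of `Sym_i × Sym_n → Sym_{i+n}`
being realized in the Grassmann model by `x·(1+η_i)·shift(y)`, splits as
`(1 - t_{ℓ(J)}) 𝒬'_{i▷J} + 𝒬'_{i·J}`; here `Des(i▷J) = E + i` and
`Des(i·J) = {i} ∪ (E + i)`, and `ℓ(J) = E.card + 1`. -/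
theorem stmt_10 {R : Type*} [CommRing R] (t : ℕ → R) (i n : ℕ) (hi : 0 < i) (hn : 0 < n)
    (E : Finset ℕ) (hE : E ⊆ Finset.Icc 1 (n-1)) :
    Qp R t (∅ : Finset ℕ) * ((1 + etaN R i) * Qp R t (E.image (· + i))) =
      (1 - t (E.card + 1)) • Qp R t (E.image (· + i))
        + Qp R t (insert i (E.image (· + i))) :=
  stmt_10_general t i n E hE
end

section
/- The complete homogeneous symmetric polynomial of degree n evaluated at the geometric progression (1, q, q², ..., q^s) equals the Gaussian q-binomial coefficient: h_n(1, q, ..., q^s) = qbinom(s+n, n). -/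
/-- The complete homogeneous symmetric polynomial of degree `n` in the `s+1`
(ordered) variables `x 0, x 1, ..., x s`. -/
def hpoly {R : Type*} [CommRing R] (x : ℕ → R) (s n : ℕ) : R :=
  ∑ f ∈ Finset.univ.filter (fun f : Fin n → Fin (s+1) => ∀ i j : Fin n, i ≤ j → f i ≤ f j),
    ∏ i, x ((f i : ℕ))

/-- The Gaussian (q-)binomial coefficient `[m choose k]_q`, defined by the
q-Pascal recursion `[m+1,k+1]_q = [m,k]_q + q^(k+1) [m,k+1]_q`; as a polynomial in `q`
it equals `∏_{i=1}^{k} (1-q^{m-k+i})/(1-q^i)`. -/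
def qbinom {R : Type*} [CommRing R] (q : R) : ℕ → ℕ → R
  | _, 0 => 1
  | 0, _+1 => 0
  | m+1, k+1 => qbinom q m k + q^(k+1) * qbinom q m (k+1)

/-!
Splitting the monotone maps `f : Fin (n+1) → Fin (s+2)` according to whether `f 0 = 0` gives
`h_{n+1}(x_0, …, x_{s+1}) = x_0 h_n(x_0, …, x_{s+1}) + h_{n+1}(x_1, …, x_{s+1})`.
At `x_k = q^k` the last term is `q^{n+1} h_{n+1}(1, …, q^s)` by homogeneity, so `h_n(1, …, q^s)`
satisfies the q-Pascal recursion that defines `qbinom`, with the same boundary values.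
-/

open Finset

lemma Fin.monotone_cons_iff {α : Type*} [Preorder α] {n : ℕ} {a : α} {f : Fin n → α} :
    Monotone (Fin.cons a f : Fin (n + 1) → α) ↔ (∀ i, a ≤ f i) ∧ Monotone f := by
  rw [monotone_iff_forall_lt, monotone_iff_forall_lt]
  exact Fin.liftFun_cons (· ≤ ·)

section
variable {R : Type*} [CommRing R]

lemma hpoly_eq_sum_monotone (x : ℕ → R) (s n : ℕ) :
    hpoly x s n = ∑ f ∈ univ.filter (fun f : Fin n → Fin (s + 1) => Monotone f), ∏ i, x (f i) :=
  rfl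

lemma hpoly_zero_right (x : ℕ → R) (s : ℕ) : hpoly x s 0 = 1 := by
  simp [hpoly]

lemma hpoly_zero_left (x : ℕ → R) (n : ℕ) : hpoly x 0 n = x 0 ^ n := by
  simp [hpoly_eq_sum_monotone, Subsingleton.elim _ (fun _ : Fin n => (0 : Fin 1)), monotone_const]

lemma sum_monotone_of_apply_zero_eq_zero (x : ℕ → R) (s n : ℕ) :
    ∑ f ∈ univ.filter (fun f : Fin (n + 1) → Fin (s + 1) => Monotone f ∧ f 0 = 0), ∏ i, x (f i) =
      x 0 * hpoly x s n := by
  rw [hpoly_eq_sum_monotone, mul_sum]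
  refine sum_nbij' Fin.tail (fun g => Fin.cons 0 g) ?_ ?_ ?_ ?_ ?_ <;>
    simp only [mem_filter, mem_univ, true_and]
  · intro f hf
    rw [← Fin.cons_self_tail f, hf.2, Fin.monotone_cons_iff] at hf
    exact hf.1.2
  · intro g hg
    exact ⟨Fin.monotone_cons_iff.2 ⟨fun _ => Fin.zero_le _, hg⟩, rfl⟩
  · intro f hf
    rw [← hf.2, Fin.cons_self_tail]
  · intro g _
    exact Fin.tail_cons _ _
  · intro f hf
    rw [Fin.prod_univ_succ, hf.2]
    rfl

lemma sum_monotone_of_apply_zero_ne_zero (x : ℕ → R) (s n : ℕ) :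
    ∑ f ∈ univ.filter (fun f : Fin (n + 1) → Fin (s + 2) => Monotone f ∧ ¬f 0 = 0),
        ∏ i, x (f i) = hpoly (fun k => x (k + 1)) s (n + 1) := by
  rw [hpoly_eq_sum_monotone]
  have mem_ne_zero {f : Fin (n + 1) → Fin (s + 2)} (hf : Monotone f) (h0 : f 0 ≠ 0) (i) :
      f i ≠ 0 :=
    fun hi => h0 (nonpos_iff_eq_zero.1 (hi ▸ hf (Fin.zero_le i)))
  refine sum_nbij' (fun f => Fin.predAbove 0 ∘ f) (fun g => Fin.succ ∘ g) ?_ ?_ ?_ ?_ ?_ <;>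
    simp only [mem_filter, mem_univ, true_and]
  · intro f hf
    exact (Fin.predAbove_right_monotone 0).comp hf.1
  · intro g hg
    exact ⟨Fin.strictMono_succ.monotone.comp hg, Fin.succ_ne_zero _⟩
  · intro f hf
    funext i
    exact Fin.succ_predAbove_zero (mem_ne_zero hf.1 hf.2 i)
  · intro g _
    funext i
    exact Fin.predAbove_zero_succ
  · intro f hf
    refine prod_congr rfl fun i _ => ?_
    simp [← Fin.val_succ, Fin.succ_predAbove_zero (mem_ne_zero hf.1 hf.2 i)]

lemma hpoly_succ_succ (x : ℕ → R) (s n : ℕ) :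
    hpoly x (s + 1) (n + 1) = x 0 * hpoly x (s + 1) n + hpoly (fun k => x (k + 1)) s (n + 1) := by
  rw [hpoly_eq_sum_monotone, ← sum_filter_add_sum_filter_not _ (fun f => f 0 = 0), filter_filter,
    filter_filter, sum_monotone_of_apply_zero_eq_zero, sum_monotone_of_apply_zero_ne_zero]

lemma hpoly_const_mul (c : R) (x : ℕ → R) (s n : ℕ) :
    hpoly (fun k => c * x k) s n = c ^ n * hpoly x s n := by
  simp only [hpoly_eq_sum_monotone, mul_sum, prod_mul_distrib, prod_const, card_univ,
    Fintype.card_fin]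

lemma qbinom_zero_right (q : R) (m : ℕ) : qbinom q m 0 = 1 := by
  cases m <;> rfl

lemma qbinom_succ_succ (q : R) (m k : ℕ) :
    qbinom q (m + 1) (k + 1) = qbinom q m k + q ^ (k + 1) * qbinom q m (k + 1) :=
  rfl

lemma qbinom_eq_zero_of_lt (q : R) {m k : ℕ} (h : m < k) : qbinom q m k = 0 := by
  induction m generalizing k with
  | zero => obtain ⟨k, rfl⟩ := Nat.exists_eq_succ_of_ne_zero h.ne'; rfl
  | succ m ih =>
    obtain ⟨k, rfl⟩ := Nat.exists_eq_succ_of_ne_zero (Nat.ne_zero_of_lt h)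
    rw [qbinom_succ_succ, ih (by omega), ih (by omega), mul_zero, add_zero]

lemma qbinom_self (q : R) (m : ℕ) : qbinom q m m = 1 := by
  induction m with
  | zero => rfl
  | succ m ih => rw [qbinom_succ_succ, ih, qbinom_eq_zero_of_lt q m.lt_succ_self, mul_zero, add_zero]

end

/-- `h_n(1, q, q^2, ..., q^s)` equals the Gaussian binomial
coefficient `[s+n choose n]_q`. -/
theorem stmt_12 {R : Type*} [CommRing R] (q : R) (s n : ℕ) :
    hpoly (fun k => q ^ k) s n = qbinom q (s + n) n := by
  induction n generalizing s with
  | zero => rw [hpoly_zero_right, qbinom_zero_right]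
  | succ n ihn =>
    induction s with
    | zero => rw [hpoly_zero_left, zero_add, qbinom_self, pow_zero, one_pow]
    | succ s ihs =>
      have hshift : hpoly (fun k => q ^ (k + 1)) s (n + 1) =
          q ^ (n + 1) * hpoly (fun k => q ^ k) s (n + 1) := by
        simp only [pow_succ', hpoly_const_mul]
      rw [hpoly_succ_succ, hshift, ihn, ihs, pow_zero, one_mul,
        show s + 1 + (n + 1) = s + n + 1 + 1 by omega, qbinom_succ_succ, Nat.add_right_comm,
        ← add_assoc]
end

section
/- For compositions I ⊨ m and J ⊨ n with I finer than J, the cardinality of the set E = [1, ℓ(J)-1] \ Des((I∧J)_J) computed from (I,J) equals the cardinality of E' = [1, ℓ(Ī~)-1] \ Des((Ī~ ∧ J̄~)_{Ī~}) computed from the conjugate-mirror pair; more generally, for any two compositions I, J of the same n, the sets E and E' defined as in Theorem 6.3 of the paper have equal cardinality. -/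
/-- The descent set of the refining composition `K_I` (for `K` coarser than
`I`): the image of `Des(K)` (here `C`) under `c ↦ #{d ∈ Des(I) : d ≤ c}`. -/
def refineDes (base C : Finset ℕ) : Finset ℕ :=
  C.image (fun c => (base.filter (· ≤ c)).card)

/-- The descent set of the conjugate mirror `Ī∼`: the complement of `Des(I)`
in `[1, n-1]`. -/
def complDes (n : ℕ) (D : Finset ℕ) : Finset ℕ := Finset.Icc 1 (n-1) \ D

open Finset

lemma desSet_subset_Icc {n : ℕ} (I : Composition n) : desSet I ⊆ Icc 1 (n - 1) := by
  intro x hx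
  simp only [desSet, List.mem_toFinset, List.mem_map, List.mem_range] at hx
  obtain ⟨k, hk, rfl⟩ := hx
  change I.sizeUpTo (k + 1) ∈ _
  have hlt : I.sizeUpTo (k + 1) < I.sizeUpTo (k + 2) := I.sizeUpTo_strict_mono (by omega)
  have hpos : 0 < I.sizeUpTo (k + 1) :=
    (Nat.zero_le _).trans_lt (I.sizeUpTo_strict_mono (by omega))
  have hle := I.sizeUpTo_le (k + 2)
  exact mem_Icc.2 ⟨hpos, by omega⟩

lemma strictMonoOn_card_filter_le {α : Type*} [LinearOrder α] (s : Finset α) :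
    StrictMonoOn (fun c => #(s.filter (· ≤ c))) s := by
  intro a _ b hb hab
  refine card_lt_card ⟨monotone_filter_right s fun _ _ h => h.trans hab.le, fun hsub => ?_⟩
  exact (mem_filter.1 (hsub (mem_filter.2 ⟨hb, le_rfl⟩))).2.not_gt hab

lemma refineDes_subset_Icc {base C : Finset ℕ} (h : C ⊆ base) :
    refineDes base C ⊆ Icc 1 #base := by
  simp only [refineDes, image_subset_iff, mem_Icc]
  exact fun c hc => ⟨card_pos.2 ⟨c, mem_filter.2 ⟨h hc, le_rfl⟩⟩, card_filter_le _ _⟩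

lemma card_refineDes {base C : Finset ℕ} (h : C ⊆ base) : #(refineDes base C) = #C :=
  card_image_of_injOn ((strictMonoOn_card_filter_le base).injOn.mono h)

lemma card_Icc_sdiff_refineDes {base C : Finset ℕ} (h : C ⊆ base) :
    #(Icc 1 #base \ refineDes base C) = #(base \ C) := by
  rw [card_sdiff_of_subset (refineDes_subset_Icc h), card_refineDes h, card_sdiff_of_subset h,
    Nat.card_Icc, Nat.add_sub_cancel]

lemma complDes_sdiff_complDes {n : ℕ} (A : Finset ℕ) {B : Finset ℕ}
    (hB : B ⊆ Icc 1 (n - 1)) : complDes n A \ complDes n B = B \ A := by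
  ext x
  simp only [complDes, mem_sdiff]
  have := @hB x
  tauto

theorem stmt_15_general {n : ℕ} (I J : Composition n) :
    (Finset.Icc 1 (desSet J).card \
        refineDes (desSet J) (desSet I ∩ desSet J)).card =
      (Finset.Icc 1 (complDes n (desSet I)).card \
        refineDes (complDes n (desSet I))
          (complDes n (desSet I) ∩ complDes n (desSet J))).card := by
  rw [card_Icc_sdiff_refineDes inter_subset_right, card_Icc_sdiff_refineDes inter_subset_left,
    sdiff_inter_self_right, sdiff_inter_self_left,
    complDes_sdiff_complDes _ (desSet_subset_Icc J)]

/-- for any two compositions `I, J` of `n`, the sets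
`E = [1, ℓ(J)-1] \ Des((I∧J)_J)` and `E' = [1, ℓ(Ī∼)-1] \ Des((Ī∼ ∧ J̄∼)_{Ī∼})`
have equal cardinality.  Here `I∧J` is the composition with descent set
`Des(I) ∩ Des(J)`, and `Ī∼`, `J̄∼` (conjugates of mirrors) have the
complementary descent sets, so that
`Des((I∧J)_J) = refineDes (Des J) (Des I ∩ Des J)`, `ℓ(J) - 1 = |Des J|`, and
similarly on the complementary side. -/
theorem stmt_15 {n : ℕ} (hn : 0 < n) (I J : Composition n) :
    (Finset.Icc 1 (desSet J).card \
        refineDes (desSet J) (desSet I ∩ desSet J)).card =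
      (Finset.Icc 1 (complDes n (desSet I)).card \
        refineDes (complDes n (desSet I))
          (complDes n (desSet I) ∩ complDes n (desSet J))).card :=
  stmt_15_general I J
end

section
/- In the exterior algebra on η_1,...,η_{n-1}, for each K ≤ I (coarser), set S(I,K) = (d_p, d_{p-1}, ..., d_1) where {d_1 < ... < d_p} = Des((I_K)~). Then the product 𝒬'_I · (shift of 𝒬'_J by |I|) expands as ∑_{K≤I} [∏_{j=1}^{ℓ(I)-ℓ(K)}(t_{s_j} - t_{j+s_j+ℓ(J)+ℓ(K)-ℓ(I)})] 𝒬'_{K·J} + (1-t_{ℓ(J)}) [∏_{j=1}^{ℓ(I)-ℓ(K)}(t_{s_j} - t_{j+s_j+ℓ(J)+ℓ(K)-ℓ(I)-1})] 𝒬'_{K▷J}, with s_j = s^{I,K}_j the j-th entry of S(I,K), and with the convention that any term containing t_i with i ≤ 0 is zero. -/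
/-- The descent set of the conjugate `M∼` of a composition `M` of `l`:
`Des(M∼) = [1, l-1] \ (l - Des(M))`. -/
def conjDes (l : ℕ) (Dm : Finset ℕ) : Finset ℕ :=
  Finset.Icc 1 (l-1) \ (Dm.image (fun d => l - d))

/-- The sequence `S(I,K) = (d_p, …, d_1)` where `{d_1 < ⋯ < d_p} = Des((I_K)∼)`,
for `I` with descent set `DI` and `K ≤ I` with descent set `C ⊆ DI`
(`I_K` is a composition of `ℓ(I) = DI.card + 1`). -/
def sListQ (DI C : Finset ℕ) : List ℕ :=
  ((conjDes (DI.card + 1) (refineDes DI C)).sort (· ≤ ·)).reverse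

/-- `∏_{j=1}^{ℓ(I)-ℓ(K)} (t_{s_j} - t_{j+s_j+ℓ(J)+ℓ(K)-ℓ(I)-off})`, with the
convention that any term containing a `t_i` with `i ≤ 0` is zero. -/
def prodTermQ {R : Type*} [CommRing R] (t : ℕ → R) (lI lK lJ : ℕ) (s : List ℕ)
    (off : ℕ) : R :=
  if ∀ j ∈ Finset.Icc 1 (lI - lK), lI + off < j + s.getD (j-1) 0 + lJ + lK then
    ∏ j ∈ Finset.Icc 1 (lI - lK),
      (t (s.getD (j-1) 0) - t (j + s.getD (j-1) 0 + lJ + lK - lI - off))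
  else 0

/-!
Both sides are ordered products of factors `t_c + η_j`, and descents of `I` lie below those of
`J`. For a separated descent set the factors of the lower block only see their parameters shifted
by the size of the upper block, so `𝒬'_{K·J}` and `𝒬'_{K▷J}` are `t`-shifted `𝒬'_K` times `𝒬'` of
the upper block. The heart of the proof is the expansion, for every shift `q`,
`𝒬'_I = ∑_{K ≤ I} c_q(I,K) 𝒬'_K(t_{·+q})`, proved by peeling off the smallest descent `a` of `I`:
a coarsening either drops `a`, which multiplies the coefficient by `t_{ℓ(I)-1} - t_{q+ℓ(K)}` (a
new largest entry of `S(I,K)`), or keeps it, which contributes the factor `t_{q+ℓ(K)} + η_a`;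
the two recombine into `t_{ℓ(I)-1} + η_a`. Writing `1 + η_m = (t_{ℓ(J)} + η_m) + (1 - t_{ℓ(J)})`
and using the expansion with `q = ℓ(J)` and `q = ℓ(J) - 1` gives the two families of terms.
-/

open Finset

lemma Finset.sort_union_of_lt {α : Type*} [LinearOrder α] {s u : Finset α}
    (h : ∀ x ∈ s, ∀ y ∈ u, x < y) : (s ∪ u).sort (· ≤ ·) = s.sort (· ≤ ·) ++ u.sort (· ≤ ·) := by
  refine (sortedLT_sort _).pairwise.eq_of_mem_iff ?_ (by simp)
  exact List.pairwise_append.2 ⟨(sortedLT_sort _).pairwise, (sortedLT_sort _).pairwise,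
    fun x hx y hy => h x ((mem_sort _).1 hx) y ((mem_sort _).1 hy)⟩

lemma cvalP_union_of_mem_left {C M : Finset ℕ} (h : ∀ x ∈ C, ∀ y ∈ M, x < y) {j : ℕ}
    (hj : j ∈ C) : cvalP (C ∪ M) j = cvalP C j + M.card := by
  have hM : M.filter (· ≤ j) = ∅ := filter_eq_empty_iff.2 fun y hy => (h j hj y hy).not_ge
  have hdisj : Disjoint C M := disjoint_left.2 fun x hxC hxM => (h x hxC x hxM).false
  have hle : (C.filter (· ≤ j)).card ≤ C.card := card_filter_le _ _
  simp only [cvalP, rowIdx, filter_union, hM, union_empty, card_union_of_disjoint hdisj]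
  omega

lemma cvalP_union_of_mem_right {C M : Finset ℕ} (h : ∀ x ∈ C, ∀ y ∈ M, x < y) {j : ℕ}
    (hj : j ∈ M) : cvalP (C ∪ M) j = cvalP M j := by
  have hC : C.filter (· ≤ j) = C := filter_true_of_mem fun x hx => (h x hx j hj).le
  have hdisj : Disjoint C M := disjoint_left.2 fun x hxC hxM => (h x hxC x hxM).false
  simp only [cvalP, rowIdx, filter_union, hC, card_union_of_disjoint hdisj,
    card_union_of_disjoint (hdisj.mono_right (filter_subset _ M))]
  omega

section Qp

variable {R : Type*} [CommRing R]

lemma Qp_union (t : ℕ → R) {C M : Finset ℕ} (h : ∀ x ∈ C, ∀ y ∈ M, x < y) :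
    Qp R t (C ∪ M) = Qp R (fun i => t (i + M.card)) C * Qp R t M := by
  rw [Qp, sort_union_of_lt h, List.map_append, List.prod_append, Qp, Qp]
  congr 2 <;> refine List.map_congr_left fun j hj => ?_
  · rw [cvalP_union_of_mem_left h ((mem_sort _).1 hj)]
  · rw [cvalP_union_of_mem_right h ((mem_sort _).1 hj)]

lemma Qp_singleton (t : ℕ → R) (a : ℕ) :
    Qp R t {a} = algebraMap R _ (t 1) + etaN R a := by
  simp [Qp, cvalP, rowIdx, filter_singleton]

lemma Qp_insert_of_lt (t : ℕ → R) {a : ℕ} {S : Finset ℕ} (h : ∀ x ∈ S, a < x) :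
    Qp R t (insert a S) = (algebraMap R _ (t (S.card + 1)) + etaN R a) * Qp R t S := by
  rw [insert_eq, Qp_union t (by simpa using h), Qp_singleton, add_comm 1]

lemma one_add_etaN_mul_Qp (t : ℕ → R) {a : ℕ} {S : Finset ℕ} (h : ∀ x ∈ S, a < x) :
    (1 + etaN R a) * Qp R t S = Qp R t (insert a S) + (1 - t (S.card + 1)) • Qp R t S := by
  rw [Qp_insert_of_lt t h, Algebra.smul_def, map_sub, map_one]
  noncomm_ring

end Qp

lemma refineDes_insert {a : ℕ} {S C : Finset ℕ} (ha : ∀ x ∈ S, a < x) (hC : C ⊆ S) :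
    refineDes (insert a S) C = (refineDes S C).image (· + 1) := by
  have haS : a ∉ S := fun h => (ha a h).false
  rw [refineDes, refineDes, image_image]
  refine image_congr fun c hc => ?_
  simp only [Function.comp_apply, filter_insert, if_pos (ha c (hC hc)).le]
  rw [card_insert_of_notMem (by simp [haS])]

lemma refineDes_insert_insert {a : ℕ} {S C : Finset ℕ} (ha : ∀ x ∈ S, a < x) (hC : C ⊆ S) :
    refineDes (insert a S) (insert a C) = insert 1 ((refineDes S C).image (· + 1)) := by
  have hS : S.filter (· ≤ a) = ∅ := filter_eq_empty_iff.2 fun y hy => (ha y hy).not_ge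
  rw [← refineDes_insert ha hC, refineDes, image_insert, filter_insert, if_pos le_rfl, hS]
  rfl

lemma zero_notMem_refineDes {S C : Finset ℕ} (hC : C ⊆ S) : 0 ∉ refineDes S C := by
  simp only [refineDes, mem_image, card_eq_zero, filter_eq_empty_iff, not_exists, not_and]
  exact fun c hc h => h (hC hc) le_rfl

lemma conjDes_image_succ {T : Finset ℕ} (hT : 0 ∉ T) (d : ℕ) :
    conjDes (d + 2) (T.image (· + 1)) = insert (d + 1) (conjDes (d + 1) T) := by
  ext x
  simp only [conjDes, image_image, Function.comp_def, mem_sdiff, mem_insert, mem_Icc, mem_image]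
  constructor
  · rintro ⟨hx, hxT⟩
    by_cases hxd : x = d + 1
    · exact Or.inl hxd
    · exact Or.inr ⟨by omega, fun ⟨y, hy, hyx⟩ => hxT ⟨y, hy, by omega⟩⟩
  · rintro (rfl | ⟨hx, hxT⟩)
    · exact ⟨by omega, fun ⟨y, hy, hyx⟩ => hT (by rwa [show y = 0 by omega] at hy)⟩
    · exact ⟨by omega, fun ⟨y, hy, hyx⟩ => hxT ⟨y, hy, by omega⟩⟩

lemma conjDes_insert_one_image_succ (T : Finset ℕ) (d : ℕ) :
    conjDes (d + 2) (insert 1 (T.image (· + 1))) = conjDes (d + 1) T := by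
  ext x
  simp only [conjDes, image_insert, image_image, Function.comp_def, mem_sdiff, mem_insert,
    mem_Icc, mem_image, not_or]
  constructor
  · rintro ⟨hx, hx1, hxT⟩
    exact ⟨by omega, fun ⟨y, hy, hyx⟩ => hxT ⟨y, hy, by omega⟩⟩
  · rintro ⟨hx, hxT⟩
    exact ⟨by omega, by omega, fun ⟨y, hy, hyx⟩ => hxT ⟨y, hy, by omega⟩⟩

lemma sListQ_insert {a : ℕ} {S C : Finset ℕ} (ha : ∀ x ∈ S, a < x) (hC : C ⊆ S) :
    sListQ (insert a S) C = (S.card + 1) :: sListQ S C := by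
  have hlt : ∀ x ∈ conjDes (S.card + 1) (refineDes S C), ∀ y ∈ ({S.card + 1} : Finset ℕ),
      x < y := by
    intro x hx y hy
    simp only [conjDes, mem_sdiff, mem_Icc, mem_singleton] at hx hy
    omega
  rw [sListQ, sListQ, card_insert_of_notMem fun h => (ha a h).false, refineDes_insert ha hC,
    conjDes_image_succ (zero_notMem_refineDes hC), insert_eq, union_comm,
    sort_union_of_lt hlt]
  simp

lemma sListQ_insert_insert {a : ℕ} {S C : Finset ℕ} (ha : ∀ x ∈ S, a < x) (hC : C ⊆ S) :
    sListQ (insert a S) (insert a C) = sListQ S C := by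
  rw [sListQ, sListQ, card_insert_of_notMem fun h => (ha a h).false,
    refineDes_insert_insert ha hC, conjDes_insert_one_image_succ]

lemma sub_card_le_add_getD_sListQ (D : Finset ℕ) :
    ∀ C ⊆ D, ∀ i < D.card - C.card, D.card - C.card ≤ i + (sListQ D C).getD i 0 := by
  induction D using Finset.induction_on_min with
  | empty => simp
  | insert a S ha ih =>
    intro C hC i hi
    have haS : a ∉ S := fun h => (ha a h).false
    by_cases haC : a ∈ C
    · obtain ⟨C', hC', rfl⟩ : ∃ C' ⊆ S, C = insert a C' :=
        ⟨C.erase a, (erase_subset_erase a hC).trans (erase_insert haS).le,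
          (insert_erase haC).symm⟩
      have haC' : a ∉ C' := fun h => haS (hC' h)
      rw [card_insert_of_notMem haS, card_insert_of_notMem haC', Nat.add_sub_add_right] at hi ⊢
      rw [sListQ_insert_insert ha hC']
      exact ih C' hC' i hi
    · have hC' : C ⊆ S := (subset_insert_iff_of_notMem haC).1 hC
      have hCS := card_le_card hC'
      rw [card_insert_of_notMem haS] at hi ⊢
      rw [sListQ_insert ha hC']
      cases i with
      | zero => simp
      | succ i =>
        have := ih C hC' i (by omega)
        simp only [List.getD_cons_succ]
        omega

section Expansion

variable {R : Type*} [CommRing R]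

/-- `c_q(I,K) = ∏_j (t_{s_j} - t_{j+s_j+q+ℓ(K)-ℓ(I)})` with `s = S(I,K)`, indexed from `0`. -/
def coarsenCoeff (t : ℕ → R) (q : ℕ) (D C : Finset ℕ) : R :=
  ∏ i ∈ range (D.card - C.card),
    (t ((sListQ D C).getD i 0) - t (i + 1 + (sListQ D C).getD i 0 + q + C.card - D.card))

lemma coarsenCoeff_insert (t : ℕ → R) (q : ℕ) {a : ℕ} {S C : Finset ℕ}
    (ha : ∀ x ∈ S, a < x) (hC : C ⊆ S) :
    coarsenCoeff t q (insert a S) C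
      = (t (S.card + 1) - t (q + C.card + 1)) * coarsenCoeff t q S C := by
  have hlen : S.card + 1 - C.card = S.card - C.card + 1 := by
    have := card_le_card hC
    omega
  rw [coarsenCoeff, coarsenCoeff, sListQ_insert ha hC,
    card_insert_of_notMem fun h => (ha a h).false, hlen, prod_range_succ', mul_comm]
  congr 1
  · simp only [List.getD_cons_zero]
    congr 2
    omega
  · refine prod_congr rfl fun i _ => ?_
    simp only [List.getD_cons_succ]
    congr 2
    omega

lemma coarsenCoeff_insert_insert (t : ℕ → R) (q : ℕ) {a : ℕ} {S C : Finset ℕ}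
    (ha : ∀ x ∈ S, a < x) (hC : C ⊆ S) :
    coarsenCoeff t q (insert a S) (insert a C) = coarsenCoeff t q S C := by
  rw [coarsenCoeff, coarsenCoeff, sListQ_insert_insert ha hC,
    card_insert_of_notMem fun h => (ha a h).false,
    card_insert_of_notMem fun h => (ha a (hC h)).false]
  simp only [Nat.add_sub_add_right, ← add_assoc]

lemma prodTermQ_sListQ (t : ℕ → R) {D C : Finset ℕ} (hC : C ⊆ D) (q off : ℕ) :
    prodTermQ t (D.card + 1) (C.card + 1) (q + off) (sListQ D C) off = coarsenCoeff t q D C := by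
  -- the guard of `prodTermQ` (no `t_i` with `i ≤ 0`) always holds, by this bound on `S(I,K)`
  have hb := sub_card_le_add_getD_sListQ D C hC
  rw [prodTermQ, Nat.add_sub_add_right, if_pos, ← Ico_add_one_right_eq_Icc,
    prod_Ico_eq_prod_range, Nat.add_sub_cancel, coarsenCoeff]
  · refine prod_congr rfl fun i _ => ?_
    simp only [Nat.add_sub_cancel_left]
    congr 2
    omega
  · intro j hj
    rw [mem_Icc] at hj
    have := hb (j - 1) (by omega)
    omega

theorem Qp_eq_sum_coarsenCoeff_smul (t : ℕ → R) (q : ℕ) (D : Finset ℕ) :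
    Qp R t D = ∑ C ∈ D.powerset, coarsenCoeff t q D C • Qp R (fun i => t (i + q)) C := by
  induction D using Finset.induction_on_min with
  | empty => simp [coarsenCoeff, Qp]
  | insert a S ha ih =>
    have haS : a ∉ S := fun h => (ha a h).false
    rw [Qp_insert_of_lt t ha, ih, mul_sum, sum_powerset_insert haS, ← sum_add_distrib]
    refine sum_congr rfl fun C hC => ?_
    have hC := mem_powerset.1 hC
    rw [coarsenCoeff_insert t q ha hC, coarsenCoeff_insert_insert t q ha hC,
      Qp_insert_of_lt _ fun x hx => ha x (hC hx)]
    simp only [add_mul, mul_smul_comm, ← Algebra.smul_def, smul_add, smul_smul]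
    rw [show C.card + 1 + q = q + C.card + 1 by ring]
    module

lemma Qp_mul_Qp_of_lt (t : ℕ → R) {D M : Finset ℕ} (h : ∀ x ∈ D, ∀ y ∈ M, x < y) :
    Qp R t D * Qp R t M = ∑ C ∈ D.powerset, coarsenCoeff t M.card D C • Qp R t (C ∪ M) := by
  rw [Qp_eq_sum_coarsenCoeff_smul t M.card D, sum_mul]
  refine sum_congr rfl fun C hC => ?_
  rw [smul_mul_assoc, Qp_union t fun x hx => h x (mem_powerset.1 hC hx)]

end Expansion

/-- `I` is a composition of `m` with descent set `DI`, `J` a composition of `n` with descent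
set `E`; the product of `Sym_m × Sym_n → Sym_{m+n}` is realized by `x·(1+η_m)·shift_m(y)`.
Coarsenings `K ≤ I` correspond to subsets `C ⊆ DI`; `Des(K·J) = C ∪ (E+m) ∪ {m}` and
`Des(K▷J) = C ∪ (E+m)`; `ℓ(I) = DI.card + 1`, `ℓ(K) = C.card + 1`, `ℓ(J) = E.card + 1`. -/
theorem stmt_17_general {R : Type*} [CommRing R] (t : ℕ → R) (m n : ℕ)
    (DI E : Finset ℕ) (hDI : DI ⊆ Finset.Icc 1 (m-1)) (hE : E ⊆ Finset.Icc 1 (n-1)) :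
    Qp R t DI * ((1 + etaN R m) * Qp R t (E.image (· + m))) =
      ∑ C ∈ DI.powerset,
        (prodTermQ t (DI.card + 1) (C.card + 1) (E.card + 1) (sListQ DI C) 0 •
            Qp R t ((C ∪ E.image (· + m)) ∪ {m})
          + ((1 - t (E.card + 1)) *
              prodTermQ t (DI.card + 1) (C.card + 1) (E.card + 1) (sListQ DI C) 1) •
            Qp R t (C ∪ E.image (· + m))) := by
  set E' := E.image (· + m)
  have hE' : ∀ y ∈ E', m < y := by
    simp only [E', mem_image]
    rintro _ ⟨x, hx, rfl⟩
    have := (mem_Icc.1 (hE hx)).1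
    omega
  have hDI' : ∀ x ∈ DI, ∀ y ∈ insert m E', x < y := by
    intro x hx y hy
    have := mem_Icc.1 (hDI hx)
    rcases mem_insert.1 hy with rfl | hy
    · omega
    · have := hE' y hy
      omega
  have hcard : E'.card = E.card := card_image_of_injective _ (add_left_injective m)
  rw [one_add_etaN_mul_Qp t hE', hcard, mul_add, mul_smul_comm, Qp_mul_Qp_of_lt t hDI',
    Qp_mul_Qp_of_lt t fun x hx y hy => hDI' x hx y (mem_insert_of_mem hy), smul_sum,
    ← sum_add_distrib]
  refine sum_congr rfl fun C hC => ?_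
  rw [mem_powerset] at hC
  have hset : C ∪ E' ∪ {m} = C ∪ insert m E' := by
    ext
    simp only [mem_union, mem_insert, mem_singleton]
    tauto
  rw [card_insert_of_notMem fun h => (hE' m h).false, hcard, smul_smul, hset,
    ← prodTermQ_sListQ t hC (E.card + 1) 0, ← prodTermQ_sListQ t hC E.card 1]

/-- the multiparameter product rule for the Hall–Littlewood
`𝒬`-basis, in the Grassmann model.  `I` is a composition of `m` with descent
set `DI`, `J` a composition of `n` with descent set `E`; the product of
`Sym_m × Sym_n → Sym_{m+n}` is realized by `x·(1+η_m)·shift_m(y)`, the shift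
replacing each `η_k` of `𝒬'_J` by `η_{k+m}`.  Coarsenings `K ≤ I` correspond
to subsets `C ⊆ DI`; `Des(K·J) = C ∪ (E+m) ∪ {m}` and `Des(K▷J) = C ∪ (E+m)`;
`ℓ(I) = DI.card + 1`, `ℓ(K) = C.card + 1`, `ℓ(J) = E.card + 1`. -/
theorem stmt_17 {R : Type*} [CommRing R] (t : ℕ → R) (m n : ℕ) (hm : 0 < m) (hn : 0 < n)
    (DI E : Finset ℕ) (hDI : DI ⊆ Finset.Icc 1 (m-1)) (hE : E ⊆ Finset.Icc 1 (n-1)) :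
    Qp R t DI * ((1 + etaN R m) * Qp R t (E.image (· + m))) =
      ∑ C ∈ DI.powerset,
        (prodTermQ t (DI.card + 1) (C.card + 1) (E.card + 1) (sListQ DI C) 0 •
            Qp R t ((C ∪ E.image (· + m)) ∪ {m})
          + ((1 - t (E.card + 1)) *
              prodTermQ t (DI.card + 1) (C.card + 1) (E.card + 1) (sListQ DI C) 1) •
            Qp R t (C ∪ E.image (· + m))) :=
  stmt_17_general t m n DI E hDI hE
end
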